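/- arXiv:1507.04197 — 6 statements merged into one kernel-verified Lean document; each statement's English description precedes it below -/
import Mathlib

section
/- A d×(N+1) real matrix λ lies in Λ_{N,d} if and only if: λ_{i,n}=0 for i>n; λ_{i,n}=N for i<n+d-N+1; ∑_{i=1}^d λ_{i,n}=dn for 0<n<N; λ_{i,n}≤λ_{i,n+1} for 1≤i≤d and i≤n<N-d+i-1; λ_{i,n}≤λ_{i-1,n-1} for 1<i≤d and i≤n<N-d+i; λ_{d,d}≥0; and λ_{1,N-d}≤N. -/
open Finset

/-- Entry `λ_{i,n}` of an eigenstep tableau, with `1 ≤ i ≤ d` and `0 ≤ n ≤ N`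
(value `0` outside this range). -/
def ent (N d : ℕ) (lam : Fin d → Fin (N + 1) → ℝ) (i n : ℕ) : ℝ :=
  if h : 1 ≤ i ∧ i ≤ d ∧ n ≤ N then lam ⟨i - 1, by omega⟩ ⟨n, by omega⟩ else 0

/-- The polytope of eigensteps `Λ_{N,d}` of equal norm tight frames (`μ = d`). -/
def Lambda (N d : ℕ) : Set (Fin d → Fin (N + 1) → ℝ) :=
  {lam |
    (∀ i, 1 ≤ i → i ≤ d → ent N d lam i 0 = 0) ∧
    (∀ i, 1 ≤ i → i ≤ d → ent N d lam i N = N) ∧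
    (∀ n, n ≤ N → ∑ i ∈ Finset.Icc 1 d, ent N d lam i n = d * n) ∧
    (∀ i n, 1 ≤ i → i ≤ d → n < N → ent N d lam i n ≤ ent N d lam i (n + 1)) ∧
    (∀ i n, 1 < i → i ≤ d → 0 < n → n ≤ N →
      ent N d lam i n ≤ ent N d lam (i - 1) (n - 1))}

section aux

variable {N d : ℕ} {lam : Fin d → Fin (N + 1) → ℝ}

lemma fwd_mono
    (h4 : ∀ i n, 1 ≤ i → i ≤ d → n < N → ent N d lam i n ≤ ent N d lam i (n + 1))
    {i m n : ℕ} (h1 : 1 ≤ i) (h2 : i ≤ d) (hmn : m ≤ n) :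
    n ≤ N → ent N d lam i m ≤ ent N d lam i n := by
  induction n, hmn using Nat.le_induction with
  | base => intro _; exact le_rfl
  | succ n hn ih => intro h; exact (ih (by omega)).trans (h4 i n h1 h2 (by omega))

lemma fwd_diag
    (h5 : ∀ i n, 1 < i → i ≤ d → 0 < n → n ≤ N →
      ent N d lam i n ≤ ent N d lam (i - 1) (n - 1)) :
    ∀ k {i n : ℕ}, 1 ≤ i → i + k ≤ d → n + k ≤ N →
      ent N d lam (i + k) (n + k) ≤ ent N d lam i n := by
  intro k
  induction k with
  | zero => intro i n _ _ _; simp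
  | succ k ih =>
    intro i n h1 h2 h3
    have hstep := h5 (i + k + 1) (n + k + 1) (by omega) (by omega) (by omega) (by omega)
    rw [show i + k + 1 - 1 = i + k by omega, show n + k + 1 - 1 = n + k by omega] at hstep
    have heq : ent N d lam (i + (k + 1)) (n + (k + 1)) = ent N d lam (i + k + 1) (n + k + 1) := by
      rw [show i + (k + 1) = i + k + 1 by omega, show n + (k + 1) = n + k + 1 by omega]
    rw [heq]
    exact hstep.trans (ih h1 (by omega) (by omega))

lemma bwd_row
    (g4 : ∀ i n, 1 ≤ i → i ≤ d → i ≤ n → (n : ℤ) < (N : ℤ) - d + i - 1 →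
      ent N d lam i n ≤ ent N d lam i (n + 1))
    {i m n : ℕ} (h1 : 1 ≤ i) (h2 : i ≤ d) (him : i ≤ m) (hmn : m ≤ n) :
    (n : ℤ) ≤ (N : ℤ) - d + i - 1 → ent N d lam i m ≤ ent N d lam i n := by
  induction n, hmn using Nat.le_induction with
  | base => intro _; exact le_rfl
  | succ n hn ih =>
    intro hb
    exact (ih (by omega)).trans (g4 i n h1 h2 (by omega) (by omega))

lemma bwd_diag
    (g5 : ∀ i n, 1 < i → i ≤ d → i ≤ n → (n : ℤ) < (N : ℤ) - d + i →
      ent N d lam i n ≤ ent N d lam (i - 1) (n - 1)) :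
    ∀ k {i n : ℕ}, 1 ≤ i → i + k ≤ d → i ≤ n → (n : ℤ) < (N : ℤ) - d + i →
      ent N d lam (i + k) (n + k) ≤ ent N d lam i n := by
  intro k
  induction k with
  | zero => intro i n _ _ _ _; simp
  | succ k ih =>
    intro i n h1 h2 h3 h4
    have hstep := g5 (i + k + 1) (n + k + 1) (by omega) (by omega) (by omega) (by omega)
    rw [show i + k + 1 - 1 = i + k by omega, show n + k + 1 - 1 = n + k by omega] at hstep
    have heq : ent N d lam (i + (k + 1)) (n + (k + 1)) = ent N d lam (i + k + 1) (n + k + 1) := by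
      rw [show i + (k + 1) = i + k + 1 by omega, show n + (k + 1) = n + k + 1 by omega]
    rw [heq]
    exact hstep.trans (ih h1 (by omega) h3 h4)

lemma entLB (hd : d ≤ N)
    (g1 : ∀ i n, 1 ≤ i → i ≤ d → n ≤ N → n < i → ent N d lam i n = 0)
    (g2 : ∀ i n, 1 ≤ i → i ≤ d → n ≤ N → (i : ℤ) < (n : ℤ) + d - N + 1 →
      ent N d lam i n = N)
    (g4 : ∀ i n, 1 ≤ i → i ≤ d → i ≤ n → (n : ℤ) < (N : ℤ) - d + i - 1 →
      ent N d lam i n ≤ ent N d lam i (n + 1))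
    (g5 : ∀ i n, 1 < i → i ≤ d → i ≤ n → (n : ℤ) < (N : ℤ) - d + i →
      ent N d lam i n ≤ ent N d lam (i - 1) (n - 1))
    (g6 : 0 ≤ ent N d lam d d)
    {i n : ℕ} (h1 : 1 ≤ i) (h2 : i ≤ d) (h3 : n ≤ N) : 0 ≤ ent N d lam i n := by
  by_cases hc1 : n < i
  · exact le_of_eq (g1 i n h1 h2 h3 hc1).symm
  by_cases hc2 : (i : ℤ) < (n : ℤ) + d - N + 1
  · rw [g2 i n h1 h2 h3 hc2]; exact Nat.cast_nonneg N
  · have hrow := bwd_row g4 (i := d) (m := d) (n := n + (d - i))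
      (by omega) le_rfl le_rfl (by omega) (by omega)
    have hdg := bwd_diag g5 (d - i) (i := i) (n := n) h1 (by omega) (by omega) (by omega)
    rw [show i + (d - i) = d by omega] at hdg
    linarith

lemma entUB (hd : d ≤ N)
    (g1 : ∀ i n, 1 ≤ i → i ≤ d → n ≤ N → n < i → ent N d lam i n = 0)
    (g2 : ∀ i n, 1 ≤ i → i ≤ d → n ≤ N → (i : ℤ) < (n : ℤ) + d - N + 1 →
      ent N d lam i n = N)
    (g4 : ∀ i n, 1 ≤ i → i ≤ d → i ≤ n → (n : ℤ) < (N : ℤ) - d + i - 1 →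
      ent N d lam i n ≤ ent N d lam i (n + 1))
    (g5 : ∀ i n, 1 < i → i ≤ d → i ≤ n → (n : ℤ) < (N : ℤ) - d + i →
      ent N d lam i n ≤ ent N d lam (i - 1) (n - 1))
    (g7 : ent N d lam 1 (N - d) ≤ N)
    {i n : ℕ} (h1 : 1 ≤ i) (h2 : i ≤ d) (h3 : n ≤ N) : ent N d lam i n ≤ N := by
  by_cases hc1 : n < i
  · rw [g1 i n h1 h2 h3 hc1]; exact Nat.cast_nonneg N
  by_cases hc2 : (i : ℤ) < (n : ℤ) + d - N + 1
  · exact le_of_eq (g2 i n h1 h2 h3 hc2)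
  · have hdg := bwd_diag g5 (i - 1) (i := 1) (n := n - (i - 1))
      le_rfl (by omega) (by omega) (by omega)
    rw [show 1 + (i - 1) = i by omega, show n - (i - 1) + (i - 1) = n by omega] at hdg
    have hrow := bwd_row g4 (i := 1) (m := n - (i - 1)) (n := N - d)
      le_rfl (by omega) (by omega) (by omega) (by omega)
    linarith

end aux

theorem stmt_2 (N d : ℕ) (hd : d ≤ N) (lam : Fin d → Fin (N + 1) → ℝ) :
    lam ∈ Lambda N d ↔
      ((∀ i n, 1 ≤ i → i ≤ d → n ≤ N → n < i → ent N d lam i n = 0) ∧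
       (∀ i n, 1 ≤ i → i ≤ d → n ≤ N → (i : ℤ) < (n : ℤ) + d - N + 1 →
         ent N d lam i n = N) ∧
       (∀ n, 0 < n → n < N → ∑ i ∈ Finset.Icc 1 d, ent N d lam i n = d * n) ∧
       (∀ i n, 1 ≤ i → i ≤ d → i ≤ n → (n : ℤ) < (N : ℤ) - d + i - 1 →
         ent N d lam i n ≤ ent N d lam i (n + 1)) ∧
       (∀ i n, 1 < i → i ≤ d → i ≤ n → (n : ℤ) < (N : ℤ) - d + i →
         ent N d lam i n ≤ ent N d lam (i - 1) (n - 1)) ∧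
       0 ≤ ent N d lam d d ∧
       ent N d lam 1 (N - d) ≤ N) := by
  simp only [Lambda, Set.mem_setOf_eq]
  constructor
  · rintro ⟨h1, h2, h3, h4, h5⟩
    refine ⟨?_, ?_, ?_, ?_, ?_, ?_, ?_⟩
    · -- zeros
      intro i n hi1 hid hnN hni
      have hub := fwd_diag h5 n (i := i - n) (n := 0) (by omega) (by omega) (by omega)
      rw [show i - n + n = i by omega, show 0 + n = n by omega] at hub
      rw [h1 (i - n) (by omega) (by omega)] at hub
      have hlb := fwd_mono h4 hi1 hid (Nat.zero_le n) hnN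
      rw [h1 i hi1 hid] at hlb
      linarith
    · -- N's
      intro i n hi1 hid hnN hcond
      have hub := fwd_mono h4 hi1 hid hnN le_rfl
      rw [h2 i hi1 hid] at hub
      have hlb := fwd_diag h5 (N - n) (i := i) (n := n) hi1 (by omega) (by omega)
      rw [show n + (N - n) = N by omega, h2 (i + (N - n)) (by omega) (by omega)] at hlb
      linarith
    · exact fun n _ hn => h3 n hn.le
    · exact fun i n ha hb hc hx => h4 i n ha hb (by omega)
    · exact fun i n ha hb hc hx => h5 i n ha hb (by omega) (by omega)
    · by_cases hd0 : d = 0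
      · subst hd0
        rw [show ent N 0 lam 0 0 = 0 from dif_neg (by omega)]
      · have hm := fwd_mono h4 (i := d) (m := 0) (n := d) (by omega) le_rfl (Nat.zero_le d) hd
        rw [h1 d (by omega) le_rfl] at hm
        exact hm
    · by_cases hd0 : d = 0
      · subst hd0
        rw [show ent N 0 lam 1 (N - 0) = 0 from dif_neg (by omega)]
        exact Nat.cast_nonneg N
      · have hm := fwd_mono h4 (i := 1) (m := N - d) (n := N) le_rfl (by omega)
          (by omega) le_rfl
        rw [h2 1 le_rfl (by omega)] at hm
        exact hm
  · rintro ⟨g1, g2, g3, g4, g5, g6, g7⟩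
    refine ⟨?_, ?_, ?_, ?_, ?_⟩
    · exact fun i hi1 hid => g1 i 0 hi1 hid (Nat.zero_le N) hi1
    · exact fun i hi1 hid => g2 i N hi1 hid le_rfl (by omega)
    · intro n hnN
      rcases Nat.eq_zero_or_pos n with h0 | hpos
      · subst h0
        have hz : ∀ i ∈ Finset.Icc 1 d, ent N d lam i 0 = 0 := fun i hi => by
          rw [Finset.mem_Icc] at hi
          exact g1 i 0 hi.1 hi.2 (Nat.zero_le N) hi.1
        rw [Finset.sum_congr rfl hz]
        simp
      rcases Nat.eq_or_lt_of_le hnN with hN | hlt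
      · rw [hN]
        have hz : ∀ i ∈ Finset.Icc 1 d, ent N d lam i N = (N : ℝ) := fun i hi => by
          rw [Finset.mem_Icc] at hi
          exact g2 i N hi.1 hi.2 le_rfl (by omega)
        rw [Finset.sum_congr rfl hz, Finset.sum_const, Nat.card_Icc]
        simp [nsmul_eq_mul]
      · exact g3 n hpos hlt
    · intro i n hi1 hid hnN
      by_cases hc1 : n + 1 < i
      · rw [g1 i n hi1 hid (by omega) (by omega), g1 i (n + 1) hi1 hid (by omega) hc1]
      by_cases hc2 : n + 1 = i
      · rw [g1 i n hi1 hid (by omega) (by omega)]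
        exact entLB hd g1 g2 g4 g5 g6 hi1 hid (by omega)
      by_cases hc3 : (n : ℤ) < (N : ℤ) - d + i - 1
      · exact g4 i n hi1 hid (by omega) hc3
      · rw [g2 i (n + 1) hi1 hid (by omega) (by omega)]
        exact entUB hd g1 g2 g4 g5 g7 hi1 hid (by omega)
    · intro i n hi1 hid hn0 hnN
      by_cases hc1 : n < i
      · rw [g1 i n (by omega) hid hnN hc1]
        exact entLB hd g1 g2 g4 g5 g6 (by omega) (by omega) (by omega)
      by_cases hc2 : (n : ℤ) < (N : ℤ) - d + i
      · exact g5 i n hi1 hid (by omega) hc2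
      · rw [g2 i n (by omega) hid hnN (by omega),
            g2 (i - 1) (n - 1) (by omega) (by omega) (by omega) (by omega)]
end

section
/- If 0<d<N, then the affine hull of Λ_{N,d} (equivalently, the affine subspace cut out by the triangle conditions λ_{i,n}=0 for i>n, λ_{i,n}=N for i<n+d-N+1, and the column sum conditions ∑_i λ_{i,n}=dn for 0<n<N) has dimension (d-1)(N-d-1). -/
open Finset

/-- The explicit integer interior point of the eigensteps polytope. -/
def esLam0 (N d : ℕ) (i n : ℤ) : ℤ :=
  if n < i then 0
  else if i + N ≤ n + d then N
  else min (max n (d : ℤ)) (max ((N : ℤ) - n) ((N : ℤ) - d)) +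
      max 1 (n + d + 1 - N) + min (d : ℤ) n - 2 * i

section IntLemmas
variable {N d : ℕ} {i n : ℤ}

lemma esLam0_zero (hn : n < i) : esLam0 N d i n = 0 := by
  unfold esLam0; rw [if_pos hn]

lemma esLam0_top (hdN : (d : ℤ) ≤ N) (h : i + N ≤ n + d) : esLam0 N d i n = N := by
  unfold esLam0; split_ifs <;> omega

lemma esLam0_free (h1 : i ≤ n) (h2 : n + d + 1 ≤ i + N) :
    esLam0 N d i n = min (max n (d : ℤ)) (max ((N : ℤ) - n) ((N : ℤ) - d)) +
      max 1 (n + d + 1 - N) + min (d : ℤ) n - 2 * i := by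
  unfold esLam0; split_ifs <;> omega

lemma esLam0_mono (hdN : (d : ℤ) < N) (hi1 : 1 ≤ i) (hid : i ≤ d)
    (hn0 : 0 ≤ n) (hnN : n + 1 ≤ N) : esLam0 N d i n ≤ esLam0 N d i (n + 1) := by
  unfold esLam0; split_ifs <;> omega

lemma esLam0_inter (hdN : (d : ℤ) < N) (hi1 : 2 ≤ i) (hid : i ≤ d)
    (hn0 : 1 ≤ n) (hnN : n ≤ N) : esLam0 N d i n ≤ esLam0 N d (i - 1) (n - 1) := by
  unfold esLam0; split_ifs <;> omega

-- strict slack lemmas at free entries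
lemma esLam0_s1 (hdN : (d : ℤ) < N) (hi1 : 1 ≤ i) (hid : i ≤ d)
    (h1 : i ≤ n) (h2 : n + d + 1 ≤ i + N) :
    esLam0 N d i n < esLam0 N d i (n + 1) := by
  unfold esLam0; split_ifs <;> omega

lemma esLam0_s2 (hdN : (d : ℤ) < N) (hi1 : 1 ≤ i) (hid : i ≤ d)
    (h1 : i ≤ n) (h2 : n + d + 1 ≤ i + N) :
    esLam0 N d i (n - 1) < esLam0 N d i n := by
  unfold esLam0; split_ifs <;> omega

lemma esLam0_s3 (hdN : (d : ℤ) < N) (hi1 : 2 ≤ i) (hid : i ≤ d)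
    (h1 : i ≤ n) (h2 : n + d + 1 ≤ i + N) :
    esLam0 N d i n < esLam0 N d (i - 1) (n - 1) := by
  unfold esLam0; split_ifs <;> omega

lemma esLam0_s4 (hdN : (d : ℤ) < N) (hi1 : 1 ≤ i) (hid : i + 1 ≤ d)
    (h1 : i ≤ n) (h2 : n + d + 1 ≤ i + N) :
    esLam0 N d (i + 1) (n + 1) < esLam0 N d i n := by
  unfold esLam0; split_ifs <;> omega

end IntLemmas

section Sums
variable {N d : ℕ} {n : ℤ}

lemma sumAP (k : ℕ) (a C : ℤ) :
    ∑ i ∈ Finset.Ioc a (a + k), (C - 2 * i) = k * C - 2 * k * a - k * (k + 1) := by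
  induction k with
  | zero => simp
  | succ k ih =>
    have he : Finset.Ioc a (a + (k + 1 : ℕ)) = insert (a + k + 1) (Finset.Ioc a (a + k)) := by
      ext x; simp only [Finset.mem_Ioc, Finset.mem_insert]; push_cast; omega
    rw [he, Finset.sum_insert (by simp only [Finset.mem_Ioc]; push_cast; omega), ih]
    push_cast; ring

lemma key_identity (hd0 : 1 ≤ (d : ℤ)) (hdN : (d : ℤ) < N) (hn0 : 0 ≤ n) (hnN : n ≤ N) :
    (max 1 (n + d + 1 - N) - 1) * N +
      (min (d : ℤ) n - max 1 (n + d + 1 - N) + 1) *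
        (min (max n (d : ℤ)) (max ((N : ℤ) - n) ((N : ℤ) - d))) = d * n := by
  rcases le_or_gt n d with h1 | h1 <;> rcases le_or_gt (n + d) N with h2 | h2
  · rw [max_eq_left (by omega), min_eq_right h1, max_eq_right h1,
      max_eq_left (by omega), min_eq_left (by omega)]; ring
  · rw [max_eq_right (by omega), min_eq_right h1, max_eq_right h1,
      max_eq_left (by omega), min_eq_right (by omega)]; ring
  · rw [max_eq_left (by omega), min_eq_left (by omega), max_eq_left (by omega),
      max_eq_right (by omega), min_eq_left (by omega)]; ring
  · rw [max_eq_right (by omega), min_eq_left (by omega), max_eq_left (by omega),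
      max_eq_right (by omega), min_eq_right (by omega)]; ring

lemma esLam0_colsum (hd0 : 1 ≤ (d : ℤ)) (hdN : (d : ℤ) < N) (hn0 : 0 ≤ n) (hnN : n ≤ N) :
    ∑ i ∈ Finset.Ioc (0 : ℤ) d, esLam0 N d i n = d * n := by
  set i0 : ℤ := max 1 (n + d + 1 - N) with hi0
  set i1 : ℤ := min (d : ℤ) n with hi1
  have hb1 : (0 : ℤ) ≤ i0 - 1 := by omega
  have hb2 : i0 - 1 ≤ i1 := by omega
  have hb3 : i1 ≤ (d : ℤ) := by omega
  have hsplit : Finset.Ioc (0 : ℤ) (d : ℤ) =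
      (Finset.Ioc 0 (i0 - 1) ∪ Finset.Ioc (i0 - 1) i1) ∪ Finset.Ioc i1 (d : ℤ) := by
    ext x; simp only [Finset.mem_Ioc, Finset.mem_union]; omega
  rw [hsplit, Finset.sum_union (by
      rw [Finset.disjoint_left]; intro x hx hx'
      simp only [Finset.mem_Ioc, Finset.mem_union] at hx hx'; omega),
    Finset.sum_union (by
      rw [Finset.disjoint_left]; intro x hx hx'
      simp only [Finset.mem_Ioc] at hx hx'; omega)]
  have P1 : ∑ i ∈ Finset.Ioc (0 : ℤ) (i0 - 1), esLam0 N d i n = (i0 - 1) * N := by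
    rw [Finset.sum_congr rfl (fun i hi => esLam0_top (by omega)
      (by simp only [Finset.mem_Ioc] at hi; omega))]
    rw [Finset.sum_const, nsmul_eq_mul, Int.card_Ioc]
    congr 1; omega
  have P3 : ∑ i ∈ Finset.Ioc i1 (d : ℤ), esLam0 N d i n = 0 := by
    rw [Finset.sum_congr rfl (fun i hi => esLam0_zero
      (by simp only [Finset.mem_Ioc] at hi; omega))]
    simp
  have P2 : ∑ i ∈ Finset.Ioc (i0 - 1) i1, esLam0 N d i n =
      (i1 - i0 + 1) * (min (max n (d : ℤ)) (max ((N : ℤ) - n) ((N : ℤ) - d))) := by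
    set A : ℤ := min (max n (d : ℤ)) (max ((N : ℤ) - n) ((N : ℤ) - d)) with hA
    have hcg : ∀ i ∈ Finset.Ioc (i0 - 1) i1, esLam0 N d i n = (A + i0 + i1) - 2 * i := by
      intro i hi; simp only [Finset.mem_Ioc] at hi
      exact esLam0_free (by omega) (by omega)
    rw [Finset.sum_congr rfl hcg]
    have hk : i1 = (i0 - 1) + ((i1 - i0 + 1).toNat : ℤ) := by omega
    rw [hk, sumAP]
    have : ((i1 - i0 + 1).toNat : ℤ) = i1 - i0 + 1 := by omega
    rw [this]; ring
  rw [P1, P2, P3, add_zero]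
  have := key_identity (N := N) (d := d) hd0 hdN hn0 hnN
  rw [← hi0, ← hi1] at this
  linarith [this]

end Sums

section EntLemmas
variable {N d : ℕ}

lemma ent_apply (lam : Fin d → Fin (N + 1) → ℝ) (a : Fin d) (b : Fin (N + 1)) :
    ent N d lam (a.1 + 1) b.1 = lam a b := by
  unfold ent
  rw [dif_pos ⟨by omega, by omega, by omega⟩]
  congr 1 <;> exact Fin.ext (by simp)

lemma ent_add (x y : Fin d → Fin (N + 1) → ℝ) (i n : ℕ) :
    ent N d (x + y) i n = ent N d x i n + ent N d y i n := by
  unfold ent; split <;> simp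

lemma ent_sub (x y : Fin d → Fin (N + 1) → ℝ) (i n : ℕ) :
    ent N d (x - y) i n = ent N d x i n - ent N d y i n := by
  unfold ent; split <;> simp

lemma ent_smul (c : ℝ) (x : Fin d → Fin (N + 1) → ℝ) (i n : ℕ) :
    ent N d (c • x) i n = c * ent N d x i n := by
  unfold ent; split <;> simp

/-- The interior point, as a real tableau. -/
def esX0 (N d : ℕ) : Fin d → Fin (N + 1) → ℝ :=
  fun a b => ((esLam0 N d (a.1 + 1) b.1 : ℤ) : ℝ)

lemma ent_esX0 {i n : ℕ} (h1 : 1 ≤ i) (h2 : i ≤ d) (h3 : n ≤ N) :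
    ent N d (esX0 N d) i n = ((esLam0 N d i n : ℤ) : ℝ) := by
  unfold ent esX0
  rw [dif_pos ⟨h1, h2, h3⟩]
  simp only [Fin.val_mk]
  congr 2
  omega

end EntLemmas

section Membership
variable {N d : ℕ}

lemma colsum_esX0 {n : ℕ} (hd0 : 0 < d) (hdN : d < N) (hn : n ≤ N) :
    ∑ i ∈ Finset.Icc 1 d, ent N d (esX0 N d) i n = (d : ℝ) * n := by
  rw [Finset.sum_congr rfl (fun i hi => by
    simp only [Finset.mem_Icc] at hi
    exact ent_esX0 hi.1 hi.2 hn)]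
  have hz : ∑ j ∈ Finset.Ioc (0 : ℤ) (d : ℤ), esLam0 N d j n = (d : ℤ) * n :=
    esLam0_colsum (by omega) (by omega) (by omega) (by omega)
  have hb : ∑ i ∈ Finset.Icc 1 d, ((esLam0 N d (i : ℤ) (n : ℤ) : ℤ) : ℝ) =
      ((∑ j ∈ Finset.Ioc (0 : ℤ) (d : ℤ), esLam0 N d j n : ℤ) : ℝ) := by
    rw [Int.cast_sum]
    apply Finset.sum_bij (fun (i : ℕ) _ => (i : ℤ))
    · intro a ha; simp only [Finset.mem_Icc] at ha; simp only [Finset.mem_Ioc]; omega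
    · intro a _ b _ hab; exact_mod_cast hab
    · intro b hb; simp only [Finset.mem_Ioc] at hb
      exact ⟨b.toNat, by simp only [Finset.mem_Icc]; omega, by omega⟩
    · intro a _; rfl
  rw [hb, hz]; push_cast; ring

lemma esX0_mem (hd0 : 0 < d) (hdN : d < N) : esX0 N d ∈ Lambda N d := by
  refine ⟨fun i h1 h2 => ?_, fun i h1 h2 => ?_, fun n hn => colsum_esX0 hd0 hdN hn,
    fun i n h1 h2 hn => ?_, fun i n h1 h2 hn hN => ?_⟩
  · rw [ent_esX0 h1 h2 (by omega), esLam0_zero (by omega)]; simp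
  · rw [ent_esX0 h1 h2 (by omega), esLam0_top (by omega) (by omega)]; simp
  · rw [ent_esX0 h1 h2 (by omega), ent_esX0 h1 h2 (by omega), Int.cast_le]
    have hc : ((n + 1 : ℕ) : ℤ) = (n : ℤ) + 1 := by omega
    rw [hc]
    exact esLam0_mono (N := N) (d := d) (i := (i:ℤ)) (n := (n:ℤ)) (by omega) (by omega) (by omega) (by omega) (by omega)
  · rw [ent_esX0 (by omega) h2 hN, ent_esX0 (by omega) (by omega) (by omega), Int.cast_le]
    have hc1 : ((i - 1 : ℕ) : ℤ) = (i : ℤ) - 1 := by omega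
    have hc2 : ((n - 1 : ℕ) : ℤ) = (n : ℤ) - 1 := by omega
    rw [hc1, hc2]
    exact esLam0_inter (N := N) (d := d) (i := (i:ℤ)) (n := (n:ℤ)) (by omega) (by omega) (by omega) (by omega) (by omega)

variable {lam : Fin d → Fin (N + 1) → ℝ}

lemma lam_mono (h : lam ∈ Lambda N d) {i m n : ℕ} (h1 : 1 ≤ i) (h2 : i ≤ d)
    (hmn : m ≤ n) (hn : n ≤ N) : ent N d lam i m ≤ ent N d lam i n := by
  obtain ⟨-, -, -, h4, -⟩ := h
  induction n with
  | zero => have : m = 0 := by omega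
            subst this; exact le_rfl
  | succ k ih =>
    rcases Nat.lt_or_ge m (k + 1) with hm | hm
    · exact le_trans (ih (by omega) (by omega)) (h4 i k h1 h2 (by omega))
    · have : m = k + 1 := by omega
      subst this; exact le_rfl

lemma lam_zero (h : lam ∈ Lambda N d) {i n : ℕ} (h1 : 1 ≤ i) (h2 : i ≤ d)
    (hni : n < i) (hN : n ≤ N) : ent N d lam i n = 0 := by
  have hub : ∀ n, ∀ i, 1 ≤ i → i ≤ d → n < i → n ≤ N → ent N d lam i n ≤ 0 := by
    intro n
    induction n with
    | zero => intro i a b c e; rw [h.1 i a b]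
    | succ k ih =>
      intro i a b c e
      calc ent N d lam i (k + 1) ≤ ent N d lam (i - 1) k := by
            have := h.2.2.2.2 i (k + 1) (by omega) b (by omega) (by omega)
            simpa using this
        _ ≤ 0 := ih (i - 1) (by omega) (by omega) (by omega) (by omega)
  have hlb : (0 : ℝ) ≤ ent N d lam i n := by
    have := lam_mono h h1 h2 (Nat.zero_le n) hN
    rw [h.1 i h1 h2] at this
    exact this
  exact le_antisymm (hub n i h1 h2 hni hN) hlb

lemma lam_top (h : lam ∈ Lambda N d) {i n : ℕ} (h1 : 1 ≤ i) (h2 : i ≤ d)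
    (hni : i + N ≤ n + d) (hN : n ≤ N) : ent N d lam i n = N := by
  have hub : ent N d lam i n ≤ N := by
    have := lam_mono h h1 h2 hN le_rfl
    rwa [h.2.1 i h1 h2] at this
  have hlb : ∀ k : ℕ, ∀ i n, 1 ≤ i → i + k ≤ d → n + k = N → (N : ℝ) ≤ ent N d lam i n := by
    intro k
    induction k with
    | zero => intro i n a b c
              have : n = N := by omega
              subst this; rw [h.2.1 i a (by omega)]
    | succ k ih =>
      intro i n a b c
      calc (N : ℝ) ≤ ent N d lam (i + 1) (n + 1) := ih (i + 1) (n + 1) (by omega) (by omega) (by omega)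
        _ ≤ ent N d lam i n := by
            have := h.2.2.2.2 (i + 1) (n + 1) (by omega) (by omega) (by omega) (by omega)
            simpa using this
  exact le_antisymm hub (hlb (N - n) i n h1 (by omega) (by omega))

end Membership

section Subspace
variable {N d : ℕ}

/-- The affine set cut out by the triangle and column-sum conditions. -/
def Sset (N d : ℕ) : Set (Fin d → Fin (N + 1) → ℝ) :=
  {lam | (∀ i n, 1 ≤ i → i ≤ d → n ≤ N → n < i → ent N d lam i n = 0) ∧
         (∀ i n, 1 ≤ i → i ≤ d → n ≤ N → (i : ℤ) < (n : ℤ) + d - N + 1 →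
           ent N d lam i n = N) ∧
         (∀ n, 0 < n → n < N → ∑ i ∈ Finset.Icc 1 d, ent N d lam i n = d * n)}

/-- `Sset` as an affine subspace. -/
noncomputable def SA (N d : ℕ) : AffineSubspace ℝ (Fin d → Fin (N + 1) → ℝ) where
  carrier := Sset N d
  smul_vsub_vadd_mem' := by
    intro c p1 p2 p3 h1 h2 h3
    have key : ∀ i n, ent N d (c • (p1 -ᵥ p2) +ᵥ p3) i n =
        c * (ent N d p1 i n - ent N d p2 i n) + ent N d p3 i n := by
      intro i n
      have hrw : c • (p1 -ᵥ p2) +ᵥ p3 = c • (p1 - p2) + p3 := rfl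
      rw [hrw, ent_add, ent_smul, ent_sub]
    refine ⟨fun i n a b e f => ?_, fun i n a b e f => ?_, fun n a b => ?_⟩
    · rw [key, h1.1 i n a b e f, h2.1 i n a b e f, h3.1 i n a b e f]; ring
    · rw [key, h1.2.1 i n a b e f, h2.2.1 i n a b e f, h3.2.1 i n a b e f]; ring
    · rw [Finset.sum_congr rfl fun i _ => key i n]
      rw [Finset.sum_add_distrib, ← Finset.mul_sum, Finset.sum_sub_distrib,
        h1.2.2 n a b, h2.2.2 n a b, h3.2.2 n a b]
      ring

lemma Lambda_subset_Sset (hd0 : 0 < d) (hdN : d < N) : Lambda N d ⊆ Sset N d := by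
  intro lam h
  refine ⟨fun i n h1 h2 h3 h4 => lam_zero h h1 h2 h4 h3,
    fun i n h1 h2 h3 h4 => lam_top h h1 h2 (by omega) h3,
    fun n h1 h2 => h.2.2.1 n (by omega)⟩

/-- Elementary matrix-like tableau. -/
def bv (N d : ℕ) (i n : ℕ) : Fin d → Fin (N + 1) → ℝ :=
  fun a b => if a.1 + 1 = i ∧ b.1 = n then 1 else 0

lemma ent_bv {i n i' n' : ℕ} (h1 : 1 ≤ i') (h2 : i' ≤ d) (h3 : n' ≤ N) :
    ent N d (bv N d i n) i' n' = if i' = i ∧ n' = n then 1 else 0 := by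
  unfold ent bv
  rw [dif_pos ⟨h1, h2, h3⟩]
  simp only [Fin.val_mk]
  split_ifs with hA hB hB <;> first | rfl | omega

end Subspace

section Perturb
variable {N d : ℕ}

lemma esLam0_s2' {i n : ℤ} (hdN : (d : ℤ) < N) (hi1 : 1 ≤ i) (hid : i ≤ d)
    (h0 : 0 ≤ n) (h1 : i ≤ n + 1) (h2 : n + 1 + d + 1 ≤ i + N) :
    esLam0 N d i n < esLam0 N d i (n + 1) := by
  unfold esLam0; split_ifs <;> omega

/-- Integer perturbed tableau: move mass 1 from `(p,n)` to `(i,n)`. -/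
def yZ (N d i n p : ℕ) (a b : ℤ) : ℤ :=
  esLam0 N d a b + (if a = (i : ℤ) ∧ b = (n : ℤ) then 1 else 0)
    - (if a = (p : ℤ) ∧ b = (n : ℤ) then 1 else 0)

noncomputable def yR (N d i n p : ℕ) : Fin d → Fin (N + 1) → ℝ :=
  fun a b => ((yZ N d i n p (a.1 + 1) b.1 : ℤ) : ℝ)

lemma ent_yR {i n p i' n' : ℕ} (h1 : 1 ≤ i') (h2 : i' ≤ d) (h3 : n' ≤ N) :
    ent N d (yR N d i n p) i' n' = ((yZ N d i n p i' n' : ℤ) : ℝ) := by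
  unfold ent yR
  rw [dif_pos ⟨h1, h2, h3⟩]
  simp only [Fin.val_mk]
  have hc : ((i' - 1 : ℕ) : ℤ) + 1 = (i' : ℤ) := by omega
  rw [hc]

lemma yR_eq (i n p : ℕ) :
    yR N d i n p = esX0 N d + (bv N d i n - bv N d p n) := by
  funext a b
  simp only [yR, yZ, esX0, bv, Pi.add_apply, Pi.sub_apply]
  have e1 : ((a.1 : ℤ) + 1 = (i : ℤ) ∧ ((b.1 : ℤ)) = (n : ℤ)) ↔ (a.1 + 1 = i ∧ b.1 = n) := by
    constructor <;> intro h <;> exact ⟨by omega, by omega⟩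
  have e2 : ((a.1 : ℤ) + 1 = (p : ℤ) ∧ ((b.1 : ℤ)) = (n : ℤ)) ↔ (a.1 + 1 = p ∧ b.1 = n) := by
    constructor <;> intro h <;> exact ⟨by omega, by omega⟩
  simp only [Int.cast_sub, Int.cast_add, apply_ite (Int.cast : ℤ → ℝ), Int.cast_one,
    Int.cast_zero, e1, e2]
  ring

lemma yR_mem (hd0 : 0 < d) (hdN : d < N) {i n : ℕ} (hi1 : 1 ≤ i) (hid : i ≤ d)
    (hfn : i ≤ n) (hfN : n + d + 1 ≤ i + N) :
    yR N d i n (min d n) ∈ Lambda N d := by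
  set p := min d n with hp
  have hp1 : 1 ≤ p := by omega
  have hpd : p ≤ d := by omega
  have hpn : p ≤ n := by omega
  have hn1 : 1 ≤ n := by omega
  have hnN : n + 1 ≤ N := by omega
  have hpN : n + d + 1 ≤ p + N := by omega
  by_cases hip : i = p
  · have hy : yR N d i n p = esX0 N d := by
      funext a b
      simp only [yR, yZ, esX0, hip]
      push_cast
      ring
    rw [hy]; exact esX0_mem hd0 hdN
  refine ⟨?_, ?_, ?_, ?_, ?_⟩
  · intro i' h1 h2
    rw [ent_yR h1 h2 (by omega)]
    unfold yZ
    rw [esLam0_zero (by omega), if_neg (by rintro ⟨-, h⟩; omega),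
      if_neg (by rintro ⟨-, h⟩; omega)]
    norm_num
  · intro i' h1 h2
    rw [ent_yR h1 h2 le_rfl]
    unfold yZ
    rw [esLam0_top (by omega) (by omega), if_neg (by rintro ⟨-, h⟩; omega),
      if_neg (by rintro ⟨-, h⟩; omega)]
    norm_num
  · intro n' hn'
    rw [yR_eq, Finset.sum_congr rfl (fun i' _ => by rw [ent_add, ent_sub])]
    rw [Finset.sum_add_distrib, Finset.sum_sub_distrib, colsum_esX0 hd0 hdN hn']
    have hbv : ∀ q, 1 ≤ q → q ≤ d →
        (∑ i' ∈ Finset.Icc 1 d, ent N d (bv N d q n) i' n') = if n' = n then 1 else 0 := by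
      intro q hq1 hq2
      rw [Finset.sum_congr rfl (fun i' hi' => by
        simp only [Finset.mem_Icc] at hi'; exact ent_bv hi'.1 hi'.2 hn')]
      by_cases hnn : n' = n
      · subst hnn
        simp only [and_true, if_pos]
        rw [Finset.sum_ite_eq' (Finset.Icc 1 d) q (fun _ => (1 : ℝ))]
        simp [Finset.mem_Icc, hq1, hq2]
      · simp [hnn]
    rw [hbv i hi1 hid, hbv p hp1 hpd]
    ring
  · -- monotone in n
    intro i' n' h1 h2 hn'
    rw [ent_yR h1 h2 (by omega), ent_yR h1 h2 (by omega), Int.cast_le]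
    have hc : ((n' + 1 : ℕ) : ℤ) = (n' : ℤ) + 1 := by omega
    rw [hc]
    unfold yZ
    by_cases hA : i' = i ∧ n' = n
    · rw [if_pos ⟨by omega, by omega⟩, if_neg (by rintro ⟨h, -⟩; omega),
        if_neg (by rintro ⟨-, h⟩; omega), if_neg (by rintro ⟨-, h⟩; omega)]
      have := esLam0_s1 (N := N) (d := d) (i := (i' : ℤ)) (n := (n' : ℤ))
        (by omega) (by omega) (by omega) (by omega) (by omega)
      omega
    · by_cases hB : i' = p ∧ n' = n
      · rw [if_neg (by rintro ⟨hx, hy⟩; exact hA ⟨by omega, by omega⟩), if_pos ⟨by omega, by omega⟩,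
          if_neg (by rintro ⟨-, h⟩; omega), if_neg (by rintro ⟨-, h⟩; omega)]
        have := esLam0_mono (N := N) (d := d) (i := (i' : ℤ)) (n := (n' : ℤ))
          (by omega) (by omega) (by omega) (by omega) (by omega)
        omega
      · by_cases hD : i' = p ∧ n' + 1 = n
        · rw [if_neg (by rintro ⟨hx, hy⟩; exact hA ⟨by omega, by omega⟩),
            if_neg (by rintro ⟨hx, hy⟩; exact hB ⟨by omega, by omega⟩),
            if_neg (by rintro ⟨h, -⟩; omega), if_pos ⟨by omega, by omega⟩]
          have := esLam0_s2' (N := N) (d := d) (i := (i' : ℤ)) (n := (n' : ℤ))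
            (by omega) (by omega) (by omega) (by omega) (by omega) (by omega)
          omega
        · by_cases hC : i' = i ∧ n' + 1 = n
          · rw [if_neg (by rintro ⟨hx, hy⟩; exact hA ⟨by omega, by omega⟩),
              if_neg (by rintro ⟨hx, hy⟩; exact hB ⟨by omega, by omega⟩),
              if_pos ⟨by omega, by omega⟩, if_neg (by rintro ⟨hx, hy⟩; exact hD ⟨by omega, by omega⟩)]
            have := esLam0_mono (N := N) (d := d) (i := (i' : ℤ)) (n := (n' : ℤ))
              (by omega) (by omega) (by omega) (by omega) (by omega)
            omega
          · rw [if_neg (by rintro ⟨hx, hy⟩; exact hA ⟨by omega, by omega⟩),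
              if_neg (by rintro ⟨hx, hy⟩; exact hB ⟨by omega, by omega⟩),
              if_neg (by rintro ⟨hx, hy⟩; exact hC ⟨by omega, by omega⟩),
              if_neg (by rintro ⟨hx, hy⟩; exact hD ⟨by omega, by omega⟩)]
            have := esLam0_mono (N := N) (d := d) (i := (i' : ℤ)) (n := (n' : ℤ))
              (by omega) (by omega) (by omega) (by omega) (by omega)
            omega
  · -- interlacing
    intro i' n' h1 h2 hn0 hnN'
    rw [ent_yR (by omega) h2 hnN', ent_yR (by omega) (by omega) (by omega), Int.cast_le]
    have hca : ((i' - 1 : ℕ) : ℤ) = (i' : ℤ) - 1 := by omega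
    have hcb : ((n' - 1 : ℕ) : ℤ) = (n' : ℤ) - 1 := by omega
    rw [hca, hcb]
    unfold yZ
    by_cases hA : i' = i ∧ n' = n
    · rw [if_pos ⟨by omega, by omega⟩, if_neg (by rintro ⟨h, -⟩; omega),
        if_neg (by rintro ⟨h, -⟩; omega), if_neg (by rintro ⟨-, h⟩; omega)]
      have := esLam0_s3 (N := N) (d := d) (i := (i' : ℤ)) (n := (n' : ℤ))
        (by omega) (by omega) (by omega) (by omega) (by omega)
      omega
    · by_cases hB : i' = p ∧ n' = n
      · rw [if_neg (by rintro ⟨hx, hy⟩; exact hA ⟨by omega, by omega⟩), if_pos ⟨by omega, by omega⟩,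
          if_neg (by rintro ⟨-, h⟩; omega), if_neg (by rintro ⟨-, h⟩; omega)]
        have := esLam0_inter (N := N) (d := d) (i := (i' : ℤ)) (n := (n' : ℤ))
          (by omega) (by omega) (by omega) (by omega) (by omega)
        omega
      · by_cases hD : i' - 1 = p ∧ n' - 1 = n
        · rw [if_neg (by rintro ⟨hx, hy⟩; exact hA ⟨by omega, by omega⟩),
            if_neg (by rintro ⟨hx, hy⟩; exact hB ⟨by omega, by omega⟩),
            if_neg (by rintro ⟨h, -⟩; omega), if_pos ⟨by omega, by omega⟩]
          have := esLam0_s3 (N := N) (d := d) (i := (i' : ℤ)) (n := (n' : ℤ))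
            (by omega) (by omega) (by omega) (by omega) (by omega)
          omega
        · by_cases hC : i' - 1 = i ∧ n' - 1 = n
          · rw [if_neg (by rintro ⟨-, h⟩; omega), if_neg (by rintro ⟨-, h⟩; omega),
              if_pos ⟨by omega, by omega⟩, if_neg (by rintro ⟨hx, hy⟩; exact hD ⟨by omega, by omega⟩)]
            have := esLam0_inter (N := N) (d := d) (i := (i' : ℤ)) (n := (n' : ℤ))
              (by omega) (by omega) (by omega) (by omega) (by omega)
            omega
          · rw [if_neg (by rintro ⟨hx, hy⟩; exact hA ⟨by omega, by omega⟩),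
              if_neg (by rintro ⟨hx, hy⟩; exact hB ⟨by omega, by omega⟩),
              if_neg (by rintro ⟨hx, hy⟩; exact hC ⟨by omega, by omega⟩),
              if_neg (by rintro ⟨hx, hy⟩; exact hD ⟨by omega, by omega⟩)]
            have := esLam0_inter (N := N) (d := d) (i := (i' : ℤ)) (n := (n' : ℤ))
              (by omega) (by omega) (by omega) (by omega) (by omega)
            omega

lemma eD_mem_direction (hd0 : 0 < d) (hdN : d < N) {i n : ℕ} (hi1 : 1 ≤ i) (hid : i ≤ d)
    (hfn : i ≤ n) (hfN : n + d + 1 ≤ i + N) :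
    bv N d i n - bv N d (min d n) n ∈ (affineSpan ℝ (Lambda N d)).direction := by
  have h1 := subset_affineSpan ℝ (Lambda N d) (yR_mem hd0 hdN hi1 hid hfn hfN)
  have h2 := subset_affineSpan ℝ (Lambda N d) (esX0_mem hd0 hdN)
  have := AffineSubspace.vsub_mem_direction h1 h2
  rw [yR_eq] at this
  simpa using this

end Perturb

section SpanEq
variable {N d : ℕ}

lemma Sset_decomp (hdN : d < N) {v : Fin d → Fin (N + 1) → ℝ}
    (hvz : ∀ i' n', 1 ≤ i' → i' ≤ d → n' ≤ N → (n' < i' ∨ i' + N ≤ n' + d) →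
      ent N d v i' n' = 0)
    (hvs : ∀ n', 1 ≤ n' → n' + 1 ≤ N → ∑ i' ∈ Finset.Icc 1 d, ent N d v i' n' = 0) :
    v = ∑ n' ∈ Finset.Icc 1 (N - 1), ∑ i' ∈ Finset.Icc 1 d,
        ent N d v i' n' • (bv N d i' n' - bv N d (min d n') n') := by
  funext a b
  simp only [Finset.sum_apply, Pi.smul_apply, Pi.sub_apply, smul_eq_mul]
  have hvab : v a b = ent N d v (a.1 + 1) b.1 := (ent_apply v a b).symm
  by_cases hb : 1 ≤ b.1 ∧ b.1 + 1 ≤ N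
  · rw [Finset.sum_eq_single_of_mem b.1 (by simp only [Finset.mem_Icc]; omega)]
    · have hmain : ∀ i' ∈ Finset.Icc 1 d,
          ent N d v i' b.1 * (bv N d i' b.1 a b - bv N d (min d b.1) b.1 a b) =
          (if a.1 + 1 = i' then ent N d v i' b.1 else 0)
            - ent N d v i' b.1 * (if a.1 + 1 = min d b.1 then 1 else 0) := by
        intro i' _
        simp only [bv, and_true, if_pos rfl]
        split_ifs <;> ring
      rw [Finset.sum_congr rfl hmain, Finset.sum_sub_distrib,
        Finset.sum_ite_eq (Finset.Icc 1 d) (a.1 + 1) (fun i' => ent N d v i' b.1),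
        if_pos (by simp only [Finset.mem_Icc]; omega), ← Finset.sum_mul,
        hvs b.1 hb.1 hb.2, zero_mul, sub_zero, hvab]
    · intro n' hn' hne
      apply Finset.sum_eq_zero
      intro i' _
      simp only [bv]
      rw [if_neg (by rintro ⟨-, h⟩; omega), if_neg (by rintro ⟨-, h⟩; omega)]
      ring
  · rw [hvab, hvz (a.1 + 1) b.1 (by omega) (by omega) (by omega) (by omega)]
    symm
    apply Finset.sum_eq_zero
    intro n' hn'
    apply Finset.sum_eq_zero
    intro i' _
    simp only [Finset.mem_Icc] at hn'
    simp only [bv]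
    rw [if_neg (by rintro ⟨-, h⟩; omega), if_neg (by rintro ⟨-, h⟩; omega)]
    ring

lemma v_mem_direction (hd0 : 0 < d) (hdN : d < N) {v : Fin d → Fin (N + 1) → ℝ}
    (hvz : ∀ i' n', 1 ≤ i' → i' ≤ d → n' ≤ N → (n' < i' ∨ i' + N ≤ n' + d) →
      ent N d v i' n' = 0)
    (hvs : ∀ n', 1 ≤ n' → n' + 1 ≤ N → ∑ i' ∈ Finset.Icc 1 d, ent N d v i' n' = 0) :
    v ∈ (affineSpan ℝ (Lambda N d)).direction := by
  rw [Sset_decomp hdN hvz hvs]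
  apply Submodule.sum_mem
  intro n' hn'
  apply Submodule.sum_mem
  intro i' hi'
  simp only [Finset.mem_Icc] at hn' hi'
  by_cases hfree : i' ≤ n' ∧ n' + d + 1 ≤ i' + N
  · exact Submodule.smul_mem _ _ (eD_mem_direction hd0 hdN hi'.1 hi'.2 hfree.1 hfree.2)
  · rw [hvz i' n' hi'.1 hi'.2 (by omega) (by omega), zero_smul]
    exact Submodule.zero_mem _

lemma Sset_subset_span (hd0 : 0 < d) (hdN : d < N) :
    Sset N d ⊆ (affineSpan ℝ (Lambda N d) : Set (Fin d → Fin (N + 1) → ℝ)) := by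
  intro lam hlam
  set v := lam - esX0 N d with hv
  have hvz : ∀ i' n', 1 ≤ i' → i' ≤ d → n' ≤ N → (n' < i' ∨ i' + N ≤ n' + d) →
      ent N d v i' n' = 0 := by
    intro i' n' h1 h2 h3 h4
    rw [hv, ent_sub]
    rcases h4 with h4 | h4
    · rw [hlam.1 i' n' h1 h2 h3 h4, ent_esX0 h1 h2 h3, esLam0_zero (by omega)]
      simp
    · rw [hlam.2.1 i' n' h1 h2 h3 (by omega), ent_esX0 h1 h2 h3,
        esLam0_top (by omega) (by omega)]
      simp
  have hvs : ∀ n', 1 ≤ n' → n' + 1 ≤ N →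
      ∑ i' ∈ Finset.Icc 1 d, ent N d v i' n' = 0 := by
    intro n' h1 h2
    rw [hv, Finset.sum_congr rfl (fun i' _ => ent_sub lam (esX0 N d) i' n'),
      Finset.sum_sub_distrib, hlam.2.2 n' (by omega) (by omega),
      colsum_esX0 hd0 hdN (by omega), sub_self]
  have hmem := AffineSubspace.vadd_mem_of_mem_direction
    (v_mem_direction hd0 hdN hvz hvs)
    (subset_affineSpan ℝ (Lambda N d) (esX0_mem hd0 hdN))
  have : v +ᵥ esX0 N d = lam := by
    rw [hv]; exact sub_add_cancel lam (esX0 N d)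
  rwa [this] at hmem

lemma span_eq_Sset (hd0 : 0 < d) (hdN : d < N) :
    (affineSpan ℝ (Lambda N d) : Set (Fin d → Fin (N + 1) → ℝ)) = Sset N d := by
  apply subset_antisymm
  · exact fun x hx => (affineSpan_le (Q := SA N d)).mpr (Lambda_subset_Sset hd0 hdN) hx
  · exact Sset_subset_span hd0 hdN

end SpanEq

section Dimension
variable {N d : ℕ}

lemma ent_val {i' n' : ℕ} (v : Fin d → Fin (N + 1) → ℝ)
    (h1 : 1 ≤ i') (h2 : i' ≤ d) (h3 : n' ≤ N) :
    ent N d v i' n' = v ⟨i' - 1, by omega⟩ ⟨n', by omega⟩ := by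
  unfold ent; rw [dif_pos ⟨h1, h2, h3⟩]

lemma ent_sum {α : Type*} (s : Finset α) (g : α → (Fin d → Fin (N + 1) → ℝ)) (i n : ℕ) :
    ent N d (∑ x ∈ s, g x) i n = ∑ x ∈ s, ent N d (g x) i n := by
  unfold ent
  split
  · simp
  · simp

lemma colsum_bv {q n n' : ℕ} (hq1 : 1 ≤ q) (hq2 : q ≤ d) (hn' : n' ≤ N) :
    (∑ i' ∈ Finset.Icc 1 d, ent N d (bv N d q n) i' n') = if n' = n then 1 else 0 := by
  rw [Finset.sum_congr rfl (fun i' hi' => by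
    simp only [Finset.mem_Icc] at hi'; exact ent_bv hi'.1 hi'.2 hn')]
  by_cases hnn : n' = n
  · subst hnn
    simp only [and_true, if_pos]
    rw [Finset.sum_ite_eq' (Finset.Icc 1 d) q (fun _ => (1 : ℝ))]
    simp [Finset.mem_Icc, hq1, hq2]
  · simp [hnn]

/-- Index of the `j`-th forced entry in row `i`. -/
def esSig (N d : ℕ) (i : Fin d) (j : Fin (d + 1)) : Fin (N + 1) :=
  ⟨(if j.1 ≤ i.1 then j.1 else N - d + j.1) % (N + 1), Nat.mod_lt _ (Nat.succ_pos N)⟩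

lemma esSig_val (hdN : d < N) (i : Fin d) (j : Fin (d + 1)) :
    (esSig N d i j).1 = if j.1 ≤ i.1 then j.1 else N - d + j.1 := by
  have hi := i.2
  have hj := j.2
  simp only [esSig]
  exact Nat.mod_eq_of_lt (by split_ifs <;> omega)

/-- The linear map whose kernel is the direction of the affine span. -/
noncomputable def Tmap (N d : ℕ) :
    (Fin d → Fin (N + 1) → ℝ) →ₗ[ℝ] ((Fin d → Fin (d + 1) → ℝ) × (Fin (N - 1) → ℝ)) where
  toFun v := (fun i j => v i (esSig N d i j),
    fun m => ∑ i' ∈ Finset.Icc 1 d, ent N d v i' (m.1 + 1))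
  map_add' x y := by
    refine Prod.ext rfl ?_
    funext m
    show ∑ i' ∈ Finset.Icc 1 d, ent N d (x + y) i' (m.1 + 1) = _
    rw [Finset.sum_congr rfl fun i' _ => ent_add x y i' (m.1 + 1), Finset.sum_add_distrib]
    rfl
  map_smul' c x := by
    refine Prod.ext rfl ?_
    funext m
    show ∑ i' ∈ Finset.Icc 1 d, ent N d (c • x) i' (m.1 + 1) = _
    rw [Finset.sum_congr rfl fun i' _ => ent_smul c x i' (m.1 + 1), ← Finset.mul_sum]
    rfl

lemma Tmap_zero_iff (v : Fin d → Fin (N + 1) → ℝ) :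
    Tmap N d v = 0 ↔ ((∀ i j, v i (esSig N d i j) = 0) ∧
      ∀ m : Fin (N - 1), ∑ i' ∈ Finset.Icc 1 d, ent N d v i' (m.1 + 1) = 0) := by
  constructor
  · intro h
    exact ⟨fun i j => congrFun (congrFun (congrArg Prod.fst h) i) j,
      fun m => congrFun (congrArg Prod.snd h) m⟩
  · rintro ⟨h1, h2⟩
    exact Prod.ext (funext fun i => funext fun j => h1 i j) (funext h2)

lemma Tmap_surj (hd0 : 0 < d) (hdN : d < N) : Function.Surjective (Tmap N d) := by
  rintro ⟨f, s⟩
  classical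
  set w : Fin d → Fin (N + 1) → ℝ := fun a b =>
    if h1 : b.1 ≤ a.1 then f a ⟨b.1, by have := a.2; omega⟩
    else if h2 : N - d + a.1 + 1 ≤ b.1 then f a ⟨b.1 - (N - d), by have := b.2; omega⟩
    else 0 with hw
  set v : Fin d → Fin (N + 1) → ℝ := w + ∑ m' : Fin (N - 1),
    (s m' - ∑ i' ∈ Finset.Icc 1 d, ent N d w i' (m'.1 + 1)) •
      bv N d (min d (m'.1 + 1)) (m'.1 + 1) with hv
  refine ⟨v, ?_⟩
  have hbvz : ∀ (m' : Fin (N - 1)) (i : Fin d) (j : Fin (d + 1)),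
      bv N d (min d (m'.1 + 1)) (m'.1 + 1) i (esSig N d i j) = 0 := by
    intro m' i j
    have hm := m'.2
    have hi := i.2
    have hj := j.2
    have hs := esSig_val hdN i j
    simp only [bv]
    rw [if_neg]
    rintro ⟨hA, hB⟩
    rw [hs] at hB
    split_ifs at hB <;> omega
  have hfirst : ∀ (i : Fin d) (j : Fin (d + 1)), v i (esSig N d i j) = f i j := by
    intro i j
    have hi := i.2
    have hj := j.2
    have hs := esSig_val hdN i j
    rw [hv]
    simp only [Pi.add_apply, Finset.sum_apply, Pi.smul_apply, smul_eq_mul]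
    rw [Finset.sum_eq_zero (fun m' _ => by rw [hbvz m' i j, mul_zero]), add_zero]
    simp only [hw]
    split_ifs at hs with hcase
    · rw [dif_pos (by omega)]
      congr 1
      exact Fin.ext (by simp [hs])
    · rw [dif_neg (by omega), dif_pos (by omega)]
      congr 1
      exact Fin.ext (by simp [hs])
  apply Prod.ext
  · exact funext fun i => funext fun j => hfirst i j
  · funext m
    show ∑ i' ∈ Finset.Icc 1 d, ent N d v i' (m.1 + 1) = s m
    have hm := m.2
    have hrw : ∀ i' ∈ Finset.Icc 1 d, ent N d v i' (m.1 + 1) =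
        ent N d w i' (m.1 + 1) + ∑ m' : Fin (N - 1),
          (s m' - ∑ i'' ∈ Finset.Icc 1 d, ent N d w i'' (m'.1 + 1)) *
            ent N d (bv N d (min d (m'.1 + 1)) (m'.1 + 1)) i' (m.1 + 1) := by
      intro i' _
      rw [hv, ent_add, ent_sum]
      congr 1
      exact Finset.sum_congr rfl fun m' _ => ent_smul _ _ _ _
    rw [Finset.sum_congr rfl hrw, Finset.sum_add_distrib]
    rw [Finset.sum_comm]
    have hinner : ∀ m' : Fin (N - 1),
        (∑ i' ∈ Finset.Icc 1 d,
          (s m' - ∑ i'' ∈ Finset.Icc 1 d, ent N d w i'' (m'.1 + 1)) *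
            ent N d (bv N d (min d (m'.1 + 1)) (m'.1 + 1)) i' (m.1 + 1)) =
        (if m = m' then (s m' - ∑ i'' ∈ Finset.Icc 1 d, ent N d w i'' (m'.1 + 1)) else 0) := by
      intro m'
      have hm' := m'.2
      rw [← Finset.mul_sum, colsum_bv (by omega) (by omega) (by omega)]
      by_cases h : m = m'
      · subst h; rw [if_pos rfl, if_pos rfl]; ring
      · rw [if_neg (fun hc => h (Fin.ext (by omega))), if_neg h]; ring
    rw [Finset.sum_congr rfl fun m' _ => hinner m']
    rw [Finset.sum_ite_eq Finset.univ m
      (fun m' => s m' - ∑ i'' ∈ Finset.Icc 1 d, ent N d w i'' (m'.1 + 1))]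
    simp

lemma direction_eq_ker (hd0 : 0 < d) (hdN : d < N) :
    (affineSpan ℝ (Lambda N d)).direction = LinearMap.ker (Tmap N d) := by
  ext v
  rw [LinearMap.mem_ker, Tmap_zero_iff]
  have hx0span := subset_affineSpan ℝ (Lambda N d) (esX0_mem hd0 hdN)
  rw [← AffineSubspace.vadd_mem_iff_mem_direction v hx0span]
  have hset : (v +ᵥ esX0 N d ∈ affineSpan ℝ (Lambda N d)) ↔
      (v +ᵥ esX0 N d) ∈ Sset N d := by
    rw [← AffineSubspace.mem_coe, span_eq_Sset hd0 hdN]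
  rw [hset]
  have hvadd : v +ᵥ esX0 N d = v + esX0 N d := rfl
  constructor
  · intro hS
    constructor
    · intro i j
      have hi := i.2
      have hj := j.2
      have hs := esSig_val hdN i j
      have hrange : (esSig N d i j).1 ≤ N := by omega
      have hent : ent N d v (i.1 + 1) (esSig N d i j).1 = v i (esSig N d i j) := by
        rw [ent_val v (by omega) (by omega) hrange]
        congr 1
      by_cases hcase : j.1 ≤ i.1
      · have h0 := hS.1 (i.1 + 1) (esSig N d i j).1 (by omega) (by omega) hrange
          (by rw [hs, if_pos hcase]; omega)
        rw [hvadd, ent_add, ent_esX0 (by omega) (by omega) hrange,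
          esLam0_zero (by rw [hs, if_pos hcase]; push_cast; omega)] at h0
        rw [← hent]
        simpa using h0
      · have h0 := hS.2.1 (i.1 + 1) (esSig N d i j).1 (by omega) (by omega) hrange
          (by rw [hs, if_neg hcase]; push_cast; omega)
        rw [hvadd, ent_add, ent_esX0 (by omega) (by omega) hrange,
          esLam0_top (by omega) (by rw [hs, if_neg hcase]; push_cast; omega)] at h0
        rw [← hent]
        push_cast at h0
        linarith
    · intro m
      have hm := m.2
      have h0 := hS.2.2 (m.1 + 1) (by omega) (by omega)
      rw [hvadd, Finset.sum_congr rfl (fun i' _ => ent_add v (esX0 N d) i' (m.1 + 1)),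
        Finset.sum_add_distrib, colsum_esX0 hd0 hdN (by omega)] at h0
      linarith
  · rintro ⟨h1, h2⟩
    have hvz : ∀ i' n', 1 ≤ i' → i' ≤ d → n' ≤ N → (n' < i' ∨ i' + N ≤ n' + d) →
        ent N d v i' n' = 0 := by
      intro i' n' ha hb hc hd'
      rw [ent_val v ha hb hc]
      rcases hd' with hcase | hcase
      · have := h1 ⟨i' - 1, by omega⟩ ⟨n', by omega⟩
        have hs := esSig_val hdN ⟨i' - 1, by omega⟩ ⟨n', by omega⟩
        rw [if_pos (by simp; omega)] at hs
        convert this using 2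
        exact Fin.ext (by simp [hs])
      · have hjb : n' - (N - d) < d + 1 := by omega
        have := h1 ⟨i' - 1, by omega⟩ ⟨n' - (N - d), hjb⟩
        have hs := esSig_val hdN ⟨i' - 1, by omega⟩ ⟨n' - (N - d), hjb⟩
        rw [if_neg (by simp; omega)] at hs
        convert this using 2
        exact Fin.ext (by simp [hs]; omega)
    refine ⟨fun i' n' ha hb hc hd' => ?_, fun i' n' ha hb hc hd' => ?_, fun n' ha hb => ?_⟩
    · rw [hvadd, ent_add, hvz i' n' ha hb hc (Or.inl hd'),
        ent_esX0 ha hb hc, esLam0_zero (by push_cast; omega)]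
      simp
    · rw [hvadd, ent_add, hvz i' n' ha hb hc (Or.inr (by omega)),
        ent_esX0 ha hb hc, esLam0_top (by omega) (by omega)]
      simp
    · rw [hvadd, Finset.sum_congr rfl (fun i'' _ => ent_add v (esX0 N d) i'' n'),
        Finset.sum_add_distrib, colsum_esX0 hd0 hdN (by omega)]
      have := h2 ⟨n' - 1, by omega⟩
      simp only [Fin.val_mk] at this
      rw [show n' - 1 + 1 = n' by omega] at this
      rw [this, zero_add]

end Dimension

theorem stmt_7 (N d : ℕ) (hd0 : 0 < d) (hdN : d < N) :
    ((affineSpan ℝ (Lambda N d) : AffineSubspace ℝ (Fin d → Fin (N + 1) → ℝ)) : Set (Fin d → Fin (N + 1) → ℝ)) =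
      {lam | (∀ i n, 1 ≤ i → i ≤ d → n ≤ N → n < i → ent N d lam i n = 0) ∧
             (∀ i n, 1 ≤ i → i ≤ d → n ≤ N → (i : ℤ) < (n : ℤ) + d - N + 1 →
               ent N d lam i n = N) ∧
             (∀ n, 0 < n → n < N → ∑ i ∈ Finset.Icc 1 d, ent N d lam i n = d * n)} ∧
    Module.finrank ℝ (affineSpan ℝ (Lambda N d)).direction = (d - 1) * (N - d - 1) := by
  constructor
  · exact span_eq_Sset hd0 hdN
  · rw [direction_eq_ker hd0 hdN]
    have hr := LinearMap.finrank_range_add_finrank_ker (Tmap N d)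
    rw [LinearMap.range_eq_top.mpr (Tmap_surj hd0 hdN), finrank_top] at hr
    have hdom : Module.finrank ℝ (Fin d → Fin (N + 1) → ℝ) = d * (N + 1) := by
      simp [Module.finrank_pi_fintype, Module.finrank_pi]
    have hcod : Module.finrank ℝ ((Fin d → Fin (d + 1) → ℝ) × (Fin (N - 1) → ℝ)) =
        d * (d + 1) + (N - 1) := by
      simp [Module.finrank_prod, Module.finrank_pi_fintype, Module.finrank_pi]
    rw [hdom, hcod] at hr
    have h1 : Module.finrank ℝ (LinearMap.ker (Tmap N d)) + (d * (d + 1) + (N - 1)) =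
        d * (N + 1) :=
      (add_comm _ _).trans hr
    have h2 : d * (N + 1) = (d - 1) * (N - d - 1) + (d * (d + 1) + (N - 1)) := by
      obtain ⟨a, rfl⟩ : ∃ a, d = a + 1 := ⟨d - 1, by omega⟩
      obtain ⟨b, rfl⟩ : ∃ b, N = (a + 1) + b + 1 := ⟨N - a - 2, by omega⟩
      have e1 : (a + 1) - 1 = a := by omega
      have e2 : ((a + 1) + b + 1) - (a + 1) - 1 = b := by omega
      have e3 : ((a + 1) + b + 1) - 1 = a + b + 1 := by omega
      rw [e1, e2, e3]
      ring
    exact Nat.add_right_cancel (h1.trans h2)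
end

section
/- For d=0 and d=N the polytope Λ_{N,d} consists of exactly one point; for 0<d<N it has dimension (d-1)(N-d-1) as a convex subset of R^{d×(N+1)}. -/
open Finset

section Helpers
variable {N d : ℕ}

lemma ent_eq (lam : Fin d → Fin (N+1) → ℝ) {i n : ℕ} (h1 : 1 ≤ i) (h2 : i ≤ d) (h3 : n ≤ N)
    (j : Fin d) (m : Fin (N+1)) (hj : (j : ℕ) = i - 1) (hm : (m : ℕ) = n) :
    ent N d lam i n = lam j m := by
  have hj' : (⟨i - 1, by omega⟩ : Fin d) = j := by apply Fin.ext; simp [hj]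
  have hm' : (⟨n, by omega⟩ : Fin (N+1)) = m := by apply Fin.ext; simp [hm]
  rw [ent, dif_pos ⟨h1, h2, h3⟩, hj', hm']

lemma sum_ent_eq (lam : Fin d → Fin (N+1) → ℝ) {n : ℕ} (hn : n ≤ N) :
    ∑ i ∈ Finset.Icc 1 d, ent N d lam i n = ∑ j : Fin d, lam j ⟨n, by omega⟩ := by
  refine Finset.sum_bij' (fun a ha => (⟨a - 1, by simp at ha; omega⟩ : Fin d))
    (fun b _ => (b : ℕ) + 1) ?_ ?_ ?_ ?_ ?_
  · intro a ha; exact Finset.mem_univ _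
  · intro b _; simp
  · intro a ha; simp at ha ⊢; omega
  · intro b _; apply Fin.ext; simp
  · intro a ha; simp at ha
    exact ent_eq lam ha.1 ha.2 hn _ _ rfl rfl


/-- Monotonicity chain: entries are nonnegative. -/
lemma Lambda.nonneg {lam : Fin d → Fin (N+1) → ℝ} (hl : lam ∈ Lambda N d)
    {i n : ℕ} (h1 : 1 ≤ i) (h2 : i ≤ d) (hn : n ≤ N) : 0 ≤ ent N d lam i n := by
  have key : ∀ n, n ≤ N → 0 ≤ ent N d lam i n := by
    intro n
    induction n with
    | zero => intro _; rw [hl.1 i h1 h2]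
    | succ n ih =>
      intro hn
      exact le_trans (ih (by omega)) (hl.2.2.2.1 i n h1 h2 (by omega))
  exact key n hn

lemma Lambda.le_N {lam : Fin d → Fin (N+1) → ℝ} (hl : lam ∈ Lambda N d)
    {i n : ℕ} (h1 : 1 ≤ i) (h2 : i ≤ d) (hn : n ≤ N) : ent N d lam i n ≤ N := by
  have key : ∀ m n, n + m = N → ent N d lam i n ≤ N := by
    intro m
    induction m with
    | zero =>
      intro n hn'
      have : n = N := by omega
      subst this
      rw [hl.2.1 i h1 h2]
    | succ m ih =>
      intro n hn'
      calc ent N d lam i n ≤ ent N d lam i (n+1) := hl.2.2.2.1 i n h1 h2 (by omega)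
      _ ≤ N := ih (n+1) (by omega)
  exact key (N - n) n (by omega)

lemma Lambda.zero_of_lt {lam : Fin d → Fin (N+1) → ℝ} (hl : lam ∈ Lambda N d)
    {i n : ℕ} (h1 : 1 ≤ i) (h2 : i ≤ d) (hn : n ≤ N) (hlt : n < i) :
    ent N d lam i n = 0 := by
  have key : ∀ n, ∀ i, 1 ≤ i → i ≤ d → n ≤ N → n < i → ent N d lam i n = 0 := by
    intro n
    induction n with
    | zero => intro i h1 h2 _ _; exact hl.1 i h1 h2
    | succ n ih =>
      intro i h1 h2 hn hlt
      have hle : ent N d lam i (n+1) ≤ ent N d lam (i-1) n := by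
        have := hl.2.2.2.2 i (n+1) (by omega) h2 (by omega) (by omega)
        simpa using this
      have hz : ent N d lam (i-1) n = 0 := ih (i-1) (by omega) (by omega) (by omega) (by omega)
      have hnn : 0 ≤ ent N d lam i (n+1) := Lambda.nonneg hl h1 h2 hn
      linarith
  exact key n i h1 h2 hn hlt

lemma Lambda.N_of_ge {lam : Fin d → Fin (N+1) → ℝ} (hl : lam ∈ Lambda N d)
    {i n : ℕ} (h1 : 1 ≤ i) (h2 : i ≤ d) (hn : n ≤ N) (hge : N + i ≤ n + d) :
    ent N d lam i n = (N : ℝ) := by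
  have key : ∀ m, ∀ n i, 1 ≤ i → i ≤ d → n + m = N → N + i ≤ n + d →
      ent N d lam i n = (N : ℝ) := by
    intro m
    induction m with
    | zero =>
      intro n i h1 h2 hn' _
      have : n = N := by omega
      subst this
      exact hl.2.1 i h1 h2
    | succ m ih =>
      intro n i h1 h2 hn' hge'
      have hd2 : i + 1 ≤ d := by omega
      have hle : ent N d lam (i+1) (n+1) ≤ ent N d lam i n := by
        have := hl.2.2.2.2 (i+1) (n+1) (by omega) hd2 (by omega) (by omega)
        simpa using this
      have hv : ent N d lam (i+1) (n+1) = (N : ℝ) :=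
        ih (n+1) (i+1) (by omega) hd2 (by omega) (by omega)
      have hub : ent N d lam i n ≤ N := Lambda.le_N hl h1 h2 (by omega)
      linarith
  exact key (N - n) n i h1 h2 (by omega) hge

end Helpers

section Endpoints
variable {N : ℕ}

lemma lambda_zero_unique : ∃! lam, lam ∈ Lambda N 0 := by
  refine ⟨fun j _ => j.elim0, ⟨?_, ?_, ?_, ?_, ?_⟩, ?_⟩
  · intro i h1 h2; omega
  · intro i h1 h2; omega
  · intro n hn; simp
  · intro i n h1 h2 _; omega
  · intro i n h1 h2 _ _; omega
  · intro y _; funext j; exact j.elim0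

/-- The unique element of `Λ_{N,N}`. -/
noncomputable def lamN (N : ℕ) : Fin N → Fin (N+1) → ℝ :=
  fun j n => if (j : ℕ) < (n : ℕ) then (N : ℝ) else 0

lemma lamN_mem : lamN N ∈ Lambda N N := by
  refine ⟨?_, ?_, ?_, ?_, ?_⟩
  · intro i h1 h2
    rw [ent_eq _ h1 h2 (by omega) ⟨i-1, by omega⟩ ⟨0, by omega⟩ rfl rfl]
    simp [lamN]
  · intro i h1 h2
    rw [ent_eq _ h1 h2 (le_refl N) ⟨i-1, by omega⟩ ⟨N, by omega⟩ rfl rfl]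
    simp only [lamN, if_pos (show i - 1 < N by omega)]
  · intro n hn
    rw [sum_ent_eq _ hn]
    have e1 : ∑ j : Fin N, lamN N j ⟨n, by omega⟩
        = ∑ j ∈ Finset.range N, (if j < n then (N:ℝ) else 0) :=
      Fin.sum_univ_eq_sum_range (fun j => if j < n then (N:ℝ) else 0) N
    rw [e1, ← Finset.sum_subset (Finset.range_subset_range.2 hn)
      (fun x hx hnx => by simp only [Finset.mem_range] at hx hnx; rw [if_neg (by omega)])]
    rw [Finset.sum_congr rfl (fun j hj => if_pos (Finset.mem_range.1 hj)),
      Finset.sum_const, Finset.card_range, nsmul_eq_mul, mul_comm]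
  · intro i n h1 h2 hn
    rw [ent_eq _ h1 h2 (by omega) ⟨i-1, by omega⟩ ⟨n, by omega⟩ rfl rfl,
      ent_eq _ h1 h2 (by omega) ⟨i-1, by omega⟩ ⟨n+1, by omega⟩ rfl rfl]
    simp only [lamN]
    split_ifs with hc1 hc2 hc2 <;> first | rfl | positivity | omega
  · intro i n h1 h2 hn1 hn2
    rw [ent_eq _ (by omega) h2 (by omega) ⟨i-1, by omega⟩ ⟨n, by omega⟩ rfl rfl,
      ent_eq _ (by omega : 1 ≤ i - 1) (by omega) (by omega) ⟨i-2, by omega⟩ ⟨n-1, by omega⟩ rfl rfl]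
    simp only [lamN]
    have : (i - 1 < n) ↔ (i - 2 < n - 1) := by omega
    split_ifs with hc1 hc2 hc2 <;> first | rfl | omega

lemma lambda_N_unique : ∃! lam, lam ∈ Lambda N N := by
  refine ⟨lamN N, lamN_mem, ?_⟩
  intro y hy
  funext j n
  have h1 : 1 ≤ (j : ℕ) + 1 := by omega
  have h2 : (j : ℕ) + 1 ≤ N := by omega
  have hn : (n : ℕ) ≤ N := by omega
  have he : y j n = ent N N y ((j:ℕ)+1) n := (ent_eq y h1 h2 hn j n (by omega) rfl).symm
  have he2 : lamN N j n = ent N N (lamN N) ((j:ℕ)+1) n := (ent_eq _ h1 h2 hn j n (by omega) rfl).symm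
  rw [he, he2]
  rcases lt_or_ge (j : ℕ) (n : ℕ) with h | h
  · rw [Lambda.N_of_ge hy h1 h2 hn (by omega), Lambda.N_of_ge lamN_mem h1 h2 hn (by omega)]
  · rw [Lambda.zero_of_lt hy h1 h2 hn (by omega), Lambda.zero_of_lt lamN_mem h1 h2 hn (by omega)]

end Endpoints

section Interior
variable {N d : ℕ}

/-- Value of the explicit interior point, as a function of natural-number indices
(row `j` is 0-indexed). -/
noncomputable def p0v (N d j n : ℕ) : ℝ :=
  if n ≤ j then 0 else if N + j < n + d then (N : ℝ) else (n : ℝ) + d - 1 - 2 * j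

/-- The explicit relative-interior point of `Λ_{N,d}`. -/
noncomputable def p0 (N d : ℕ) : Fin d → Fin (N+1) → ℝ :=
  fun j n => p0v N d (j : ℕ) (n : ℕ)

lemma gauss_sum (c : ℝ) (m : ℕ) :
    ∑ k ∈ Finset.range m, (c - 2 * (k : ℝ)) = m * c - m * (m - 1) := by
  induction m with
  | zero => simp
  | succ m ih => rw [Finset.sum_range_succ, ih]; push_cast; ring

lemma sum_p0 (hd : 0 < d) (hdN : d < N) {n : ℕ} (hn : n ≤ N) :
    ∑ j ∈ Finset.range d, p0v N d j n = d * n := by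
  have hab : n + d - N ≤ min n d := by omega
  have hbd : min n d ≤ d := by omega
  have h1 : ∑ j ∈ Finset.range d, p0v N d j n = ∑ j ∈ Finset.range (min n d), p0v N d j n := by
    refine (Finset.sum_subset (Finset.range_subset_range.2 hbd) ?_).symm
    intro j hj hnj
    simp only [Finset.mem_range] at hj hnj
    rw [p0v, if_pos (by omega)]
  have h2 : ∑ j ∈ Finset.range (min n d), p0v N d j n
      = ∑ j ∈ Finset.Ico 0 (n + d - N), p0v N d j n
        + ∑ j ∈ Finset.Ico (n + d - N) (min n d), p0v N d j n := by
    rw [Finset.range_eq_Ico, ← Finset.sum_Ico_consecutive _ (Nat.zero_le _) hab]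
  have h3 : ∑ j ∈ Finset.Ico 0 (n + d - N), p0v N d j n = (n + d - N : ℕ) * N := by
    rw [← Finset.range_eq_Ico]
    rw [Finset.sum_congr rfl (fun j hj => ?_), Finset.sum_const, Finset.card_range, nsmul_eq_mul]
    simp only [Finset.mem_range] at hj
    rw [p0v, if_neg (by omega), if_pos (by omega)]
  have h4 : ∑ j ∈ Finset.Ico (n + d - N) (min n d), p0v N d j n
      = ∑ j ∈ Finset.Ico (n + d - N) (min n d), ((n : ℝ) + d - 1 - 2 * j) := by
    refine Finset.sum_congr rfl (fun j hj => ?_)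
    simp only [Finset.mem_Ico] at hj
    rw [p0v, if_neg (by omega), if_neg (by omega)]
  have h5 : ∑ j ∈ Finset.Ico (n + d - N) (min n d), ((n : ℝ) + d - 1 - 2 * j)
      = ∑ k ∈ Finset.range (min n d - (n + d - N)),
          (((n : ℝ) + d - 1 - 2 * (n + d - N : ℕ)) - 2 * (k : ℝ)) := by
    rw [Finset.sum_Ico_eq_sum_range]
    refine Finset.sum_congr rfl (fun k _ => ?_)
    push_cast
    ring
  rw [h1, h2, h3, h4, h5, gauss_sum]
  rcases le_total n d with h | h
  · rcases le_total (n + d) N with h' | h'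
    · rw [show n + d - N = 0 from by omega, show min n d - 0 = n from by omega]
      push_cast
      ring
    · rw [show min n d - (n + d - N) = N - d from by omega,
        Nat.cast_sub (show N ≤ n + d from h'), Nat.cast_sub (show d ≤ N from by omega)]
      push_cast
      ring
  · rcases le_total (n + d) N with h' | h'
    · rw [show n + d - N = 0 from by omega, show min n d - 0 = d from by omega]
      push_cast
      ring
    · rw [show min n d - (n + d - N) = N - n from by omega,
        Nat.cast_sub (show N ≤ n + d from h'), Nat.cast_sub (show n ≤ N from hn)]
      push_cast
      ring

end Interior

/-- Free (non-forced) positions, 0-indexed row `j`, column `n`. -/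
def isFree (N d j n : ℕ) : Prop := j < n ∧ n + d ≤ N + j

instance (N d j n : ℕ) : Decidable (isFree N d j n) := by unfold isFree; infer_instance

section Perturb
variable {N d : ℕ}

lemma perturb_mem (hd : 0 < d) (hdN : d < N) (w : Fin d → Fin (N+1) → ℝ)
    (hw0 : ∀ (j : Fin d) (n : Fin (N+1)), ¬ isFree N d (j : ℕ) (n : ℕ) → w j n = 0)
    (hwsum : ∀ n : Fin (N+1), ∑ j, w j n = 0)
    (hwb : ∀ j n, |w j n| ≤ 1) :
    (fun (j : Fin d) (n : Fin (N+1)) => p0 N d j n + 4⁻¹ * w j n) ∈ Lambda N d := by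
  have hw0' : ∀ (j n : ℕ) (hj : j < d) (hn : n < N+1), ¬ isFree N d j n →
      w ⟨j, hj⟩ ⟨n, hn⟩ = 0 := fun j n hj hn h => hw0 ⟨j, hj⟩ ⟨n, hn⟩ h
  have hwb' : ∀ (j n : ℕ) (hj : j < d) (hn : n < N+1),
      -1 ≤ w ⟨j, hj⟩ ⟨n, hn⟩ ∧ w ⟨j, hj⟩ ⟨n, hn⟩ ≤ 1 :=
    fun j n hj hn => abs_le.1 (hwb ⟨j, hj⟩ ⟨n, hn⟩)
  refine ⟨?_, ?_, ?_, ?_, ?_⟩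
  · -- column 0
    intro i h1 h2
    rw [ent_eq _ h1 h2 (by omega) ⟨i-1, by omega⟩ ⟨0, by omega⟩ rfl rfl]
    show _
    rw [hw0' (i-1) 0 (by omega) (by omega) (by unfold isFree; omega)]
    rw [show p0 N d ⟨i-1, by omega⟩ ⟨0, by omega⟩ = p0v N d (i-1) 0 from rfl]
    rw [p0v, if_pos (by omega)]
    ring
  · -- column N
    intro i h1 h2
    rw [ent_eq _ h1 h2 (le_refl N) ⟨i-1, by omega⟩ ⟨N, by omega⟩ rfl rfl]
    show _
    rw [hw0' (i-1) N (by omega) (by omega) (by unfold isFree; omega)]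
    rw [show p0 N d ⟨i-1, by omega⟩ ⟨N, by omega⟩ = p0v N d (i-1) N from rfl]
    rw [p0v, if_neg (by omega), if_pos (by omega)]
    ring
  · -- column sums
    intro n hn
    rw [sum_ent_eq _ hn]
    show _
    rw [Finset.sum_add_distrib, ← Finset.mul_sum, hwsum ⟨n, by omega⟩, mul_zero, add_zero]
    have e1 : ∑ j : Fin d, p0 N d j ⟨n, by omega⟩ = ∑ j ∈ Finset.range d, p0v N d j n :=
      Fin.sum_univ_eq_sum_range (fun j => p0v N d j n) d
    rw [e1, sum_p0 hd hdN hn]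
  · -- monotone in n
    intro i n h1 h2 hn
    have hj : i - 1 < d := by omega
    rw [ent_eq _ h1 h2 (by omega) ⟨i-1, hj⟩ ⟨n, by omega⟩ rfl rfl,
        ent_eq _ h1 h2 (by omega) ⟨i-1, hj⟩ ⟨n+1, by omega⟩ rfl rfl]
    show _
    rw [show p0 N d ⟨i-1, hj⟩ ⟨n, by omega⟩ = p0v N d (i-1) n from rfl,
        show p0 N d ⟨i-1, hj⟩ ⟨n+1, by omega⟩ = p0v N d (i-1) (n+1) from rfl]
    set j := i - 1 with hjdef
    by_cases hc1 : n + 1 ≤ j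
    · rw [hw0' j n hj (by omega) (by unfold isFree; omega),
          hw0' j (n+1) hj (by omega) (by unfold isFree; omega)]
      rw [p0v, if_pos (by omega)]
      rw [show p0v N d j (n+1) = 0 from by rw [p0v, if_pos (by omega)]]
    · by_cases hc2 : N + j < n + d
      · rw [hw0' j n hj (by omega) (by unfold isFree; omega),
            hw0' j (n+1) hj (by omega) (by unfold isFree; omega)]
        rw [p0v, if_neg (by omega), if_pos (by omega)]
        rw [show p0v N d j (n+1) = (N:ℝ) from by rw [p0v, if_neg (by omega), if_pos (by omega)]]
      · have key : p0v N d j n + 1 ≤ p0v N d j (n+1) := by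
          by_cases hc3 : n ≤ j
          · rw [p0v, if_pos hc3,
              show p0v N d j (n+1) = ((n:ℝ)+1) + d - 1 - 2*j from by
                rw [p0v, if_neg (by omega), if_neg (by omega)]; push_cast; ring]
            have hr1 : (j:ℝ) + 1 ≤ d := by exact_mod_cast hj
            have hr2 : (n:ℝ) = j := by exact_mod_cast (show n = j by omega)
            linarith
          · by_cases hc4 : N + j < n + 1 + d
            · rw [p0v, if_neg hc3, if_neg hc2,
                show p0v N d j (n+1) = (N:ℝ) from by
                  rw [p0v, if_neg (by omega), if_pos (by omega)]]
              have hr1 : (n:ℝ) + d ≤ N + j := by exact_mod_cast (show n + d ≤ N + j by omega)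
              have hr2 : (0:ℝ) ≤ j := Nat.cast_nonneg j
              linarith
            · rw [p0v, if_neg hc3, if_neg hc2,
                show p0v N d j (n+1) = ((n:ℝ)+1) + d - 1 - 2*j from by
                  rw [p0v, if_neg (by omega), if_neg (by omega)]; push_cast; ring]
              linarith
        have b1 := hwb' j n hj (by omega)
        have b2 := hwb' j (n+1) hj (by omega)
        linarith [key, b1.1, b1.2, b2.1, b2.2]
  · -- interlacing
    intro i n h1 h2 hn1 hn2
    have hj : i - 1 < d := by omega
    have hj' : i - 2 < d := by omega
    rw [ent_eq _ (by omega) h2 hn2 ⟨i-1, hj⟩ ⟨n, by omega⟩ rfl rfl,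
        ent_eq _ (by omega : 1 ≤ i - 1) (by omega) (by omega) ⟨i-2, hj'⟩ ⟨n-1, by omega⟩ rfl rfl]
    show _
    rw [show p0 N d ⟨i-1, hj⟩ ⟨n, by omega⟩ = p0v N d (i-1) n from rfl,
        show p0 N d ⟨i-2, hj'⟩ ⟨n-1, by omega⟩ = p0v N d (i-2) (n-1) from rfl]
    by_cases hc1 : n ≤ i - 1
    · rw [hw0' (i-1) n hj (by omega) (by unfold isFree; omega),
          hw0' (i-2) (n-1) hj' (by omega) (by unfold isFree; omega)]
      rw [p0v, if_pos hc1,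
        show p0v N d (i-2) (n-1) = 0 from by rw [p0v, if_pos (by omega)]]
    · by_cases hc2 : N + (i-1) < n + d
      · rw [hw0' (i-1) n hj (by omega) (by unfold isFree; omega),
            hw0' (i-2) (n-1) hj' (by omega) (by unfold isFree; omega)]
        rw [p0v, if_neg hc1, if_pos hc2,
          show p0v N d (i-2) (n-1) = (N:ℝ) from by rw [p0v, if_neg (by omega), if_pos (by omega)]]
      · have key : p0v N d (i-1) n + 1 ≤ p0v N d (i-2) (n-1) := by
          rw [p0v, if_neg hc1, if_neg hc2,
            show p0v N d (i-2) (n-1) = ((n:ℝ)-1) + d - 1 - 2*((i:ℝ)-1-1) from by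
              rw [p0v, if_neg (by omega), if_neg (by omega)]
              rw [Nat.cast_sub (by omega : 1 ≤ n), Nat.cast_sub (by omega : 2 ≤ i)]
              push_cast
              ring]
          rw [Nat.cast_sub (by omega : 1 ≤ i)]
          push_cast
          linarith
        have b1 := hwb' (i-1) n hj (by omega)
        have b2 := hwb' (i-2) (n-1) hj' (by omega)
        linarith [key, b1.1, b1.2, b2.1, b2.2]

lemma p0_mem (hd : 0 < d) (hdN : d < N) : p0 N d ∈ Lambda N d := by
  have h := perturb_mem hd hdN 0 (fun _ _ _ => rfl) (fun _ => by simp) (fun _ _ => by simp)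
  simpa using h

end Perturb

section Wspace

/-- The direction space of the affine hull of `Λ_{N,d}`. -/
def W (N d : ℕ) : Submodule ℝ (Fin d → Fin (N+1) → ℝ) where
  carrier := {v | (∀ (j : Fin d) (n : Fin (N+1)), ¬ isFree N d (j:ℕ) (n:ℕ) → v j n = 0) ∧
    ∀ n : Fin (N+1), ∑ j, v j n = 0}
  add_mem' := by
    rintro a b ⟨ha0, has⟩ ⟨hb0, hbs⟩
    refine ⟨fun j n h => ?_, fun n => ?_⟩
    · show a j n + b j n = 0
      rw [ha0 j n h, hb0 j n h, add_zero]
    · show ∑ j : _, (a j n + b j n) = 0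
      rw [Finset.sum_add_distrib, has n, hbs n, add_zero]
  zero_mem' := ⟨fun _ _ _ => rfl, fun n => by simp⟩
  smul_mem' := by
    rintro c a ⟨ha0, has⟩
    refine ⟨fun j n h => ?_, fun n => ?_⟩
    · show c * a j n = 0
      rw [ha0 j n h, mul_zero]
    · show ∑ j : _, c * a j n = 0
      rw [← Finset.mul_sum, has n, mul_zero]

/-- Column `n` slice of `W`. -/
def Wc (N d n : ℕ) : Submodule ℝ (Fin d → ℝ) where
  carrier := {x | (∀ j : Fin d, ¬ isFree N d (j:ℕ) n → x j = 0) ∧ ∑ j, x j = 0}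
  add_mem' := by
    rintro a b ⟨ha0, has⟩ ⟨hb0, hbs⟩
    refine ⟨fun j h => ?_, ?_⟩
    · show a j + b j = 0
      rw [ha0 j h, hb0 j h, add_zero]
    · show ∑ j : _, (a j + b j) = 0
      rw [Finset.sum_add_distrib, has, hbs, add_zero]
  zero_mem' := ⟨fun _ _ => rfl, by simp⟩
  smul_mem' := by
    rintro c a ⟨ha0, has⟩
    refine ⟨fun j h => ?_, ?_⟩
    · show c * a j = 0
      rw [ha0 j h, mul_zero]
    · show ∑ j : _, c * a j = 0
      rw [← Finset.mul_sum, has, mul_zero]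

lemma mem_W_iff (N d : ℕ) (v : Fin d → Fin (N+1) → ℝ) :
    v ∈ W N d ↔ (∀ (j : Fin d) (n : Fin (N+1)), ¬ isFree N d (j:ℕ) (n:ℕ) → v j n = 0) ∧
      ∀ n : Fin (N+1), ∑ j, v j n = 0 := Iff.rfl

/-- `W` decomposes as a product of its column slices. -/
noncomputable def WEquiv (N d : ℕ) : W N d ≃ₗ[ℝ] (Π n : Fin (N+1), Wc N d (n : ℕ)) where
  toFun v := fun n => ⟨fun j => v.1 j n,
    ⟨fun j hj => ((mem_W_iff N d v.1).1 v.2).1 j n hj, ((mem_W_iff N d v.1).1 v.2).2 n⟩⟩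
  map_add' u v := rfl
  map_smul' c v := rfl
  invFun x := ⟨fun j n => (x n).1 j,
    (mem_W_iff N d _).2 ⟨fun j n hj => ((x n).2 : _ ∧ _).1 j hj, fun n => ((x n).2 : _ ∧ _).2⟩⟩
  left_inv v := rfl
  right_inv x := rfl

/-- The set of free rows in column `n`. -/
def Sfin (N d n : ℕ) : Finset (Fin d) := Finset.univ.filter (fun j => isFree N d (j:ℕ) n)

/-- Summation as a linear functional. -/
def sumF (α : Type*) [Fintype α] [DecidableEq α] : (α → ℝ) →ₗ[ℝ] ℝ where
  toFun x := ∑ a, x a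
  map_add' x y := Finset.sum_add_distrib
  map_smul' c x := by simp [Finset.mul_sum]

lemma sumF_rank (α : Type*) [Fintype α] [DecidableEq α] [Nonempty α] :
    Module.finrank ℝ (LinearMap.ker (sumF α)) + 1 = Fintype.card α := by
  have hsurj : Function.Surjective (sumF α) := by
    intro r
    obtain ⟨a⟩ := (inferInstance : Nonempty α)
    refine ⟨Pi.single a r, ?_⟩
    show ∑ b, Pi.single a r b = r
    simp [Pi.single_apply]
  have h := LinearMap.finrank_range_add_finrank_ker (sumF α)
  rw [LinearMap.range_eq_top.mpr hsurj, finrank_top, Module.finrank_self,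
    Module.finrank_pi] at h
  omega

/-- Column slice is isomorphic to the kernel of the sum functional on free coordinates. -/
noncomputable def WcEquiv (N d n : ℕ) :
    Wc N d n ≃ₗ[ℝ] LinearMap.ker (sumF {j : Fin d // j ∈ Sfin N d n}) where
  toFun x := ⟨fun s => x.1 s.1, by
    show ∑ s : {j : Fin d // j ∈ Sfin N d n}, x.1 s.1 = 0
    have hmem : (∀ j : Fin d, ¬ isFree N d (j:ℕ) n → x.1 j = 0) ∧ ∑ j, x.1 j = 0 := x.2
    rw [Finset.sum_coe_sort (Sfin N d n) (fun j => x.1 j)]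
    rw [Finset.sum_subset (Finset.subset_univ (Sfin N d n))
      (fun j _ hj => hmem.1 j (by simpa [Sfin] using hj))]
    exact hmem.2⟩
  map_add' u v := rfl
  map_smul' c v := rfl
  invFun y := ⟨fun j => if h : j ∈ Sfin N d n then y.1 ⟨j, h⟩ else 0, by
    refine ⟨fun j hj => dif_neg (by simpa [Sfin] using hj), ?_⟩
    rw [← Finset.sum_subset (Finset.subset_univ (Sfin N d n))
      (fun j _ hj => dif_neg hj)]
    rw [← Finset.sum_attach (Sfin N d n)
      (fun j => if h : j ∈ Sfin N d n then y.1 ⟨j, h⟩ else 0)]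
    rw [Finset.sum_congr rfl (fun s _ => dif_pos s.2)]
    have h2 : ∑ a : {j : Fin d // j ∈ Sfin N d n}, y.1 a = 0 := y.2
    rw [Finset.univ_eq_attach] at h2
    exact h2⟩
  left_inv x := by
    apply Subtype.ext
    funext j
    show (if h : j ∈ Sfin N d n then x.1 j else 0) = x.1 j
    have hmem : (∀ j : Fin d, ¬ isFree N d (j:ℕ) n → x.1 j = 0) ∧ ∑ j, x.1 j = 0 := x.2
    by_cases h : j ∈ Sfin N d n
    · rw [dif_pos h]
    · rw [dif_neg h, hmem.1 j (by simpa [Sfin] using h)]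
  right_inv y := by
    apply Subtype.ext
    funext s
    exact dif_pos s.2

lemma Wc_bot_of_empty {N d n : ℕ} (h : ¬ (Sfin N d n).Nonempty) : Wc N d n = ⊥ := by
  rw [Submodule.eq_bot_iff]
  intro x hx
  funext j
  refine hx.1 j (fun hf => h ⟨j, ?_⟩)
  simp [Sfin, hf]

lemma Wc_rank (N d n : ℕ) :
    Module.finrank ℝ (Wc N d n) + (if (Sfin N d n).Nonempty then 1 else 0)
      = (Sfin N d n).card := by
  by_cases h : (Sfin N d n).Nonempty
  · rw [if_pos h]
    have : Nonempty {j : Fin d // j ∈ Sfin N d n} := ⟨⟨h.choose, h.choose_spec⟩⟩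
    rw [(WcEquiv N d n).finrank_eq, sumF_rank, Fintype.card_coe]
  · rw [if_neg h, Wc_bot_of_empty h, Finset.card_eq_zero.mpr (Finset.not_nonempty_iff_eq_empty.1 h)]
    simp [finrank_bot]

end Wspace

section Counting
variable {N d : ℕ}

lemma card_Sfin_sum (hdN : d ≤ N) :
    ∑ n : Fin (N+1), (Sfin N d (n:ℕ)).card = d * (N - d) := by
  have e1 : ∀ n : Fin (N+1), (Sfin N d (n:ℕ)).card
      = ∑ j : Fin d, (if isFree N d (j:ℕ) (n:ℕ) then 1 else 0) := by
    intro n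
    rw [Sfin, Finset.card_filter]
  rw [Finset.sum_congr rfl (fun n _ => e1 n), Finset.sum_comm]
  have e2 : ∀ j : Fin d, ∑ n : Fin (N+1), (if isFree N d (j:ℕ) (n:ℕ) then 1 else 0) = N - d := by
    intro j
    have e3 : ∑ n : Fin (N+1), (if isFree N d (j:ℕ) (n:ℕ) then 1 else 0)
        = ∑ n ∈ Finset.range (N+1), (if isFree N d (j:ℕ) n then 1 else 0) :=
      Fin.sum_univ_eq_sum_range (fun n => if isFree N d (j:ℕ) n then 1 else 0) (N+1)
    rw [e3, ← Finset.sum_subset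
      (show Finset.Ico ((j:ℕ)+1) (N+(j:ℕ)-d+1) ⊆ Finset.range (N+1) from by
        intro x hx
        simp only [Finset.mem_Ico] at hx
        simp only [Finset.mem_range]
        have := j.2
        omega)
      (fun x hx hnx => by
        simp only [Finset.mem_range] at hx
        simp only [Finset.mem_Ico] at hnx
        rw [if_neg]
        unfold isFree
        have := j.2
        omega)]
    rw [Finset.sum_congr rfl (fun x hx => by
      simp only [Finset.mem_Ico] at hx
      rw [if_pos]
      unfold isFree
      have := j.2
      omega)]
    rw [Finset.sum_const, smul_eq_mul, mul_one, Nat.card_Ico]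
    have := j.2
    omega
  rw [Finset.sum_congr rfl (fun j _ => e2 j), Finset.sum_const, smul_eq_mul,
    Finset.card_univ, Fintype.card_fin]

lemma Sfin_nonempty_iff (hd : 0 < d) (hdN : d < N) (n : ℕ) (hn : n ≤ N) :
    (Sfin N d n).Nonempty ↔ 0 < n ∧ n < N := by
  constructor
  · rintro ⟨j, hj⟩
    simp only [Sfin, Finset.mem_filter] at hj
    have hf := hj.2
    unfold isFree at hf
    have := j.2
    omega
  · rintro ⟨h1, h2⟩
    refine ⟨⟨min n d - 1, by omega⟩, ?_⟩
    simp only [Sfin, Finset.mem_filter]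
    refine ⟨Finset.mem_univ _, ?_⟩
    show isFree N d (min n d - 1) n
    unfold isFree
    omega

lemma sum_indicator_interior :
    ∑ n : Fin (N+1), (if 0 < (n:ℕ) ∧ (n:ℕ) < N then 1 else 0) = N - 1 := by
  have e3 : ∑ n : Fin (N+1), (if 0 < (n:ℕ) ∧ (n:ℕ) < N then 1 else 0)
      = ∑ n ∈ Finset.range (N+1), (if 0 < n ∧ n < N then 1 else 0) :=
    Fin.sum_univ_eq_sum_range (fun n => if 0 < n ∧ n < N then 1 else 0) (N+1)
  rw [e3, ← Finset.sum_subset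
    (show Finset.Ico 1 N ⊆ Finset.range (N+1) from by
      intro x hx
      simp only [Finset.mem_Ico] at hx
      simp only [Finset.mem_range]
      omega)
    (fun x hx hnx => by
      simp only [Finset.mem_range] at hx
      simp only [Finset.mem_Ico] at hnx
      rw [if_neg (by omega)])]
  rw [Finset.sum_congr rfl (fun x hx => by
    simp only [Finset.mem_Ico] at hx
    rw [if_pos (by omega)])]
  rw [Finset.sum_const, smul_eq_mul, mul_one, Nat.card_Ico]

lemma finrank_W (hd : 0 < d) (hdN : d < N) :
    Module.finrank ℝ (W N d) = (d - 1) * (N - d - 1) := by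
  have e0 : Module.finrank ℝ (W N d) = ∑ n : Fin (N+1), Module.finrank ℝ (Wc N d (n:ℕ)) := by
    rw [(WEquiv N d).finrank_eq, Module.finrank_pi_fintype]
  have e1 : ∀ n : Fin (N+1),
      Module.finrank ℝ (Wc N d (n:ℕ)) + (if 0 < (n:ℕ) ∧ (n:ℕ) < N then 1 else 0)
        = (Sfin N d (n:ℕ)).card := by
    intro n
    rw [← Wc_rank N d (n:ℕ)]
    congr 1
    by_cases h : 0 < (n:ℕ) ∧ (n:ℕ) < N
    · rw [if_pos h, if_pos ((Sfin_nonempty_iff hd hdN (n:ℕ) (by omega)).2 h)]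
    · rw [if_neg h, if_neg (fun hne => h ((Sfin_nonempty_iff hd hdN (n:ℕ) (by omega)).1 hne))]
  have e2 : (∑ n : Fin (N+1), Module.finrank ℝ (Wc N d (n:ℕ))) + (N - 1) = d * (N - d) := by
    rw [← sum_indicator_interior (N := N), ← Finset.sum_add_distrib,
      Finset.sum_congr rfl (fun n _ => e1 n), card_Sfin_sum (by omega)]
  obtain ⟨a, rfl⟩ : ∃ a, d = a + 1 := ⟨d - 1, by omega⟩
  obtain ⟨b, rfl⟩ : ∃ b, N = (a + 1) + b + 1 := ⟨N - a - 2, by omega⟩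
  rw [e0]
  have e3 : (a + 1) * ((a + 1) + b + 1 - (a + 1)) = a * b + ((a + 1) + b + 1 - 1) := by
    rw [show (a + 1) + b + 1 - (a + 1) = b + 1 from by omega,
      show (a + 1) + b + 1 - 1 = a + b + 1 from by omega]
    ring
  rw [e3] at e2
  have e4 : ∑ n : Fin ((a + 1) + b + 1 + 1), Module.finrank ℝ (Wc ((a + 1) + b + 1) (a + 1) (n:ℕ)) = a * b :=
    Nat.add_right_cancel e2
  rw [e4, show a + 1 - 1 = a from by omega, show (a + 1) + b + 1 - (a + 1) - 1 = b from by omega]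

end Counting

section Span
variable {N d : ℕ}

lemma sub_mem_W {p q : Fin d → Fin (N+1) → ℝ} (hp : p ∈ Lambda N d) (hq : q ∈ Lambda N d) :
    p - q ∈ W N d := by
  rw [mem_W_iff]
  constructor
  · intro j n hnf
    have h1 : 1 ≤ (j:ℕ) + 1 := by omega
    have h2 : (j:ℕ) + 1 ≤ d := by omega
    have hn : (n:ℕ) ≤ N := by omega
    have ep : p j n = ent N d p ((j:ℕ)+1) (n:ℕ) := (ent_eq p h1 h2 hn j n (by omega) rfl).symm
    have eq' : q j n = ent N d q ((j:ℕ)+1) (n:ℕ) := (ent_eq q h1 h2 hn j n (by omega) rfl).symm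
    show p j n - q j n = 0
    unfold isFree at hnf
    rcases not_and_or.1 hnf with h | h
    · rw [ep, eq', Lambda.zero_of_lt hp h1 h2 hn (by omega),
        Lambda.zero_of_lt hq h1 h2 hn (by omega), sub_zero]
    · rw [ep, eq', Lambda.N_of_ge hp h1 h2 hn (by omega),
        Lambda.N_of_ge hq h1 h2 hn (by omega), sub_self]
  · intro n
    show ∑ j : Fin d, (p j n - q j n) = 0
    have hn : (n:ℕ) ≤ N := by omega
    have hp' := hp.2.2.1 (n:ℕ) hn
    have hq' := hq.2.2.1 (n:ℕ) hn
    rw [sum_ent_eq p hn] at hp'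
    rw [sum_ent_eq q hn] at hq'
    rw [Finset.sum_sub_distrib]
    have hfin : (⟨(n:ℕ), by omega⟩ : Fin (N+1)) = n := by apply Fin.ext; rfl
    rw [hfin] at hp' hq'
    rw [hp', hq', sub_self]

lemma span_eq (hd : 0 < d) (hdN : d < N) : vectorSpan ℝ (Lambda N d) = W N d := by
  apply le_antisymm
  · rw [vectorSpan_def]
    rw [Submodule.span_le]
    rintro x hx
    rw [Set.mem_vsub] at hx
    obtain ⟨p, hp, q, hq, rfl⟩ := hx
    exact sub_mem_W hp hq
  · intro v hv
    set C : ℝ := (∑ j : Fin d, ∑ n : Fin (N+1), |v j n|) + 1 with hCdef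
    have hC : 0 < C := by positivity
    have hCb : ∀ (j : Fin d) (n : Fin (N+1)), |v j n| ≤ C := by
      intro j n
      have h1 : |v j n| ≤ ∑ m : Fin (N+1), |v j m| :=
        Finset.single_le_sum (f := fun m => |v j m|) (fun m _ => abs_nonneg _) (Finset.mem_univ n)
      have h2 : (∑ m : Fin (N+1), |v j m|) ≤ ∑ i : Fin d, ∑ m : Fin (N+1), |v i m| :=
        Finset.single_le_sum (f := fun i => ∑ m : Fin (N+1), |v i m|)
          (fun i _ => Finset.sum_nonneg (fun m _ => abs_nonneg _)) (Finset.mem_univ j)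
      rw [hCdef]
      linarith
    have hwW : C⁻¹ • v ∈ W N d := Submodule.smul_mem _ _ hv
    have hwmem := (mem_W_iff N d (C⁻¹ • v)).1 hwW
    have hwb : ∀ (j : Fin d) (n : Fin (N+1)), |(C⁻¹ • v) j n| ≤ 1 := by
      intro j n
      show |C⁻¹ * v j n| ≤ 1
      rw [abs_mul, abs_inv, abs_of_pos hC]
      rw [inv_mul_le_iff₀ hC, mul_one]
      exact hCb j n
    have hq : (fun (j : Fin d) (n : Fin (N+1)) => p0 N d j n + 4⁻¹ * (C⁻¹ • v) j n) ∈ Lambda N d :=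
      perturb_mem hd hdN (C⁻¹ • v) hwmem.1 hwmem.2 hwb
    have hv1 : (fun (j : Fin d) (n : Fin (N+1)) => p0 N d j n + 4⁻¹ * (C⁻¹ • v) j n) -ᵥ p0 N d
        ∈ vectorSpan ℝ (Lambda N d) := vsub_mem_vectorSpan ℝ hq (p0_mem hd hdN)
    have hid : (fun (j : Fin d) (n : Fin (N+1)) => p0 N d j n + 4⁻¹ * (C⁻¹ • v) j n) -ᵥ p0 N d
        = (4⁻¹ : ℝ) • (C⁻¹ • v) := by
      funext j n
      show (p0 N d j n + 4⁻¹ * (C⁻¹ • v) j n) - p0 N d j n = 4⁻¹ * ((C⁻¹ • v) j n)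
      ring
    rw [hid] at hv1
    have hrec : v = (4 * C) • ((4⁻¹ : ℝ) • (C⁻¹ • v)) := by
      rw [smul_smul, smul_smul]
      rw [show (4 * C) * 4⁻¹ * C⁻¹ = (C * C⁻¹) from by ring, mul_inv_cancel₀ hC.ne', one_smul]
    rw [hrec]
    exact Submodule.smul_mem _ _ hv1

end Span

theorem stmt_8 (N : ℕ) :
    (∃! lam, lam ∈ Lambda N 0) ∧
    (∃! lam, lam ∈ Lambda N N) ∧
    (∀ d, 0 < d → d < N →
      Module.finrank ℝ (affineSpan ℝ (Lambda N d)).direction = (d - 1) * (N - d - 1)) := by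
  refine ⟨lambda_zero_unique, lambda_N_unique, ?_⟩
  intro d hd hdN
  rw [direction_affineSpan, span_eq hd hdN, finrank_W hd hdN]
end

section
/- The map Ψ_{N,d} defined on d×(N+1) matrices by (Ψ_{N,d}(λ))_{i,n}=λ_{d+i-n,N-n} for i≤n≤d+i-1, =0 for n<i, and =N for n>d+i-1, maps Λ_{N,d} bijectively onto Λ_{N,N-d}, with inverse Ψ_{N,N-d}. -/
open Finset

/-- The map `Ψ_{N,d}` on eigenstep tableaux. -/
def Psi (N d : ℕ) (lam : Fin d → Fin (N + 1) → ℝ) : Fin (N - d) → Fin (N + 1) → ℝ :=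
  fun i n =>
    if n.val < i.val + 1 then 0
    else if d + i.val + 1 ≤ n.val then N
    else ent N d lam (d + i.val + 1 - n.val) (N - n.val)

section helpers

variable {N d : ℕ} {lam : Fin d → Fin (N + 1) → ℝ}

lemma ent_nonneg (hl : lam ∈ Lambda N d) (i n : ℕ) (h1 : 1 ≤ i) (h2 : i ≤ d) (h3 : n ≤ N) :
    0 ≤ ent N d lam i n := by
  obtain ⟨hA, hB, hC, hD, hE⟩ := hl
  induction n with
  | zero => rw [hA i h1 h2]
  | succ k ih =>
    have h := hD i k h1 h2 (by omega)
    have := ih (by omega)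
    linarith

lemma ent_le_N (hl : lam ∈ Lambda N d) (i n : ℕ) (h1 : 1 ≤ i) (h2 : i ≤ d) (h3 : n ≤ N) :
    ent N d lam i n ≤ N := by
  obtain ⟨hA, hB, hC, hD, hE⟩ := hl
  suffices h : ∀ k n, N - n = k → n ≤ N → ent N d lam i n ≤ N from h _ n rfl h3
  intro k
  induction k with
  | zero =>
    intro n hn h
    have : n = N := by omega
    subst this
    rw [hB i h1 h2]
  | succ k ih =>
    intro n hn h
    have hlt : n < N := by omega
    have := hD i n h1 h2 hlt
    have := ih (n + 1) (by omega) (by omega)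
    linarith

lemma ent_chain (hl : lam ∈ Lambda N d) (i : ℕ) (h1 : 1 ≤ i) (h2 : i ≤ d) :
    ∀ n n', n ≤ n' → n' ≤ N → ent N d lam i n ≤ ent N d lam i n' := by
  intro n n' h h'
  have key : ∀ k, n + k ≤ N → ent N d lam i n ≤ ent N d lam i (n + k) := by
    intro k
    induction k with
    | zero => intro; exact le_refl _
    | succ m ih =>
      intro hm
      exact le_trans (ih (by omega)) (hl.2.2.2.1 i (n + m) h1 h2 (by omega))
  have := key (n' - n) (by omega)
  rwa [show n + (n' - n) = n' by omega] at this

lemma ent_eq_zero_of (hl : lam ∈ Lambda N d) (i n : ℕ) (h : n < i) : ent N d lam i n = 0 := by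
  induction n generalizing i with
  | zero =>
    by_cases hr : 1 ≤ i ∧ i ≤ d ∧ 0 ≤ N
    · exact hl.1 i hr.1 hr.2.1
    · exact dif_neg hr
  | succ k ih =>
    by_cases hr : 1 ≤ i ∧ i ≤ d ∧ k + 1 ≤ N
    · have hle := hl.2.2.2.2 i (k + 1) (by omega) hr.2.1 (by omega) hr.2.2
      have h0 : ent N d lam (i - 1) k = 0 := by
        have := ih (i - 1) (by omega)
        simpa using this
      have hge := ent_nonneg hl i (k + 1) hr.1 hr.2.1 hr.2.2
      have : ent N d lam i (k + 1) ≤ 0 := by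
        rw [← h0]
        simpa using hle
      linarith
    · exact dif_neg hr

lemma ent_eq_N_of (hl : lam ∈ Lambda N d) (hd : d ≤ N) (i n : ℕ)
    (h1 : 1 ≤ i) (h2 : i ≤ d) (h3 : n ≤ N) (h4 : N - d + i ≤ n) : ent N d lam i n = N := by
  have key : ∀ k i, 1 ≤ i → i ≤ d → d - i ≤ k → ent N d lam i (N - d + i) = N := by
    intro k
    induction k with
    | zero =>
      intro i h1 h2 hk
      have hi : i = d := by omega
      rw [hi, show N - d + d = N by omega]
      exact hl.2.1 d (by omega) (by omega)
    | succ k ih =>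
      intro i h1 h2 hk
      by_cases hid : i = d
      · rw [hid, show N - d + d = N by omega]
        exact hl.2.1 d (by omega) (by omega)
      · have hN' := ih (i + 1) (by omega) (by omega) (by omega)
        have hle := hl.2.2.2.2 (i + 1) (N - d + (i + 1)) (by omega) (by omega) (by omega)
          (by omega)
        have hle' : ent N d lam (i + 1) (N - d + (i + 1)) ≤ ent N d lam i (N - d + i) := by
          have e1 : i + 1 - 1 = i := by omega
          have e2 : N - d + (i + 1) - 1 = N - d + i := by omega
          rwa [e1, e2] at hle
        have hub := ent_le_N hl i (N - d + i) h1 h2 (by omega)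
        rw [hN'] at hle'
        linarith
  have hkey := key (d - i) i h1 h2 le_rfl
  have hch := ent_chain hl i h1 h2 (N - d + i) n h4 h3
  have hub := ent_le_N hl i n h1 h2 h3
  rw [hkey] at hch
  linarith

lemma entPsi (N d : ℕ) (lam : Fin d → Fin (N + 1) → ℝ) (i n : ℕ)
    (h1 : 1 ≤ i) (h2 : i ≤ N - d) (h3 : n ≤ N) :
    ent N (N - d) (Psi N d lam) i n =
      if n < i then 0 else if d + i ≤ n then (N : ℝ)
      else ent N d lam (d + i - n) (N - n) := by
  rw [ent, dif_pos ⟨h1, h2, h3⟩]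
  show Psi N d lam ⟨i - 1, _⟩ ⟨n, _⟩ = _
  rw [Psi]
  simp only
  rw [show i - 1 + 1 = i by omega, show d + (i - 1) + 1 = d + i by omega]

end helpers

/-- Auxiliary integer-indexed column function. -/
def Eaux (N d n : ℕ) (lam : Fin d → Fin (N + 1) → ℝ) : ℤ → ℝ := fun k =>
  if k ≤ (d : ℤ) - n ∨ k ≤ 0 then (N : ℝ)
  else if (N : ℤ) - n < k ∨ (d : ℤ) < k then 0
  else ent N d lam k.toNat (N - n)

lemma sum_Ioc_split (f : ℤ → ℝ) {a b c : ℤ} (h1 : a ≤ b) (h2 : b ≤ c) :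
    ∑ k ∈ Ioc a c, f k = ∑ k ∈ Ioc a b, f k + ∑ k ∈ Ioc b c, f k := by
  rw [← Ioc_union_Ioc_eq_Ioc h1 h2, Finset.sum_union]
  exact Finset.disjoint_left.mpr fun x hx hx' => by
    simp only [Finset.mem_Ioc] at hx hx'; omega

section memb

variable {N d : ℕ} {lam : Fin d → Fin (N + 1) → ℝ}

lemma psi_sum (hd : d ≤ N) (hl : lam ∈ Lambda N d) (n : ℕ) (hn : n ≤ N) :
    ∑ i ∈ Finset.Icc 1 (N - d), ent N (N - d) (Psi N d lam) i n = (N - d : ℕ) * n := by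
  have hstepA : ∀ i ∈ Finset.Icc 1 (N - d),
      ent N (N - d) (Psi N d lam) i n = Eaux N d n lam ((d : ℤ) + i - n) := by
    intro i hi
    rw [Finset.mem_Icc] at hi
    rw [entPsi N d lam i n hi.1 hi.2 hn]
    simp only [Eaux]
    by_cases c1 : n < i
    · rw [if_pos c1, if_neg (by omega), if_pos (by omega)]
    · by_cases c2 : d + i ≤ n
      · rw [if_neg c1, if_pos c2, if_pos (by omega)]
      · rw [if_neg c1, if_neg c2, if_neg (by omega), if_neg (by omega)]
        congr 1
        omega
  have hstepB : ∀ j ∈ Finset.Icc 1 d,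
      ent N d lam j (N - n) = Eaux N d n lam (j : ℤ) := by
    intro j hj
    rw [Finset.mem_Icc] at hj
    simp only [Eaux]
    by_cases c1 : (j : ℤ) ≤ (d : ℤ) - n ∨ (j : ℤ) ≤ 0
    · rw [if_pos c1]
      exact ent_eq_N_of hl hd j (N - n) hj.1 hj.2 (by omega) (by omega)
    · rw [if_neg c1]
      by_cases c2 : (N : ℤ) - n < (j : ℤ) ∨ (d : ℤ) < (j : ℤ)
      · rw [if_pos c2]
        exact ent_eq_zero_of hl j (N - n) (by omega)
      · rw [if_neg c2, Int.toNat_natCast]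
  have hSmu : ∑ i ∈ Finset.Icc 1 (N - d), ent N (N - d) (Psi N d lam) i n
      = ∑ k ∈ Finset.Ioc ((d : ℤ) - n) ((N : ℤ) - n), Eaux N d n lam k := by
    rw [Finset.sum_congr rfl hstepA]
    exact Finset.sum_nbij' (fun i => (d : ℤ) + i - n) (fun k => (k + n - d).toNat)
      (fun a ha => by
        simp only [Finset.mem_Icc] at ha
        simp only [Finset.mem_Ioc]
        omega)
      (fun b hb => by
        simp only [Finset.mem_Ioc] at hb
        simp only [Finset.mem_Icc]
        omega)
      (fun a ha => by
        simp only [Finset.mem_Icc] at ha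
        show ((d : ℤ) + a - n + n - d).toNat = a
        omega)
      (fun b hb => by
        simp only [Finset.mem_Ioc] at hb
        show (d : ℤ) + ((b + n - d).toNat : ℤ) - n = b
        omega)
      (fun a ha => rfl)
  have hSlam : ∑ k ∈ Finset.Ioc (0 : ℤ) (d : ℤ), Eaux N d n lam k
      = (d : ℝ) * ((N - n : ℕ) : ℝ) := by
    have h0 := hl.2.2.1 (N - n) (by omega)
    rw [Finset.sum_congr rfl hstepB] at h0
    rw [← h0]
    exact Finset.sum_nbij' (fun k => k.toNat) (fun j => (j : ℤ))
      (fun a ha => by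
        simp only [Finset.mem_Ioc] at ha
        simp only [Finset.mem_Icc]
        omega)
      (fun b hb => by
        simp only [Finset.mem_Icc] at hb
        simp only [Finset.mem_Ioc]
        omega)
      (fun a ha => by
        simp only [Finset.mem_Ioc] at ha
        show ((a.toNat : ℕ) : ℤ) = a
        omega)
      (fun b hb => by
        show ((b : ℤ)).toNat = b
        omega)
      (fun a ha => by
        simp only [Finset.mem_Ioc] at ha
        show Eaux N d n lam a = Eaux N d n lam ((a.toNat : ℕ) : ℤ)
        congr 1
        omega)
  have e1 : ∑ k ∈ Finset.Ioc ((d : ℤ) - N) 0, Eaux N d n lam k = ((N - d : ℕ) : ℝ) * N := by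
    rw [Finset.sum_congr rfl (fun k hk => by
      simp only [Finset.mem_Ioc] at hk
      simp only [Eaux]
      rw [if_pos (Or.inr hk.2)]), Finset.sum_const, Int.card_Ioc]
    rw [show (0 - ((d : ℤ) - N)).toNat = N - d by omega, nsmul_eq_mul]
  have e2 : ∑ k ∈ Finset.Ioc (d : ℤ) (N : ℤ), Eaux N d n lam k = 0 := by
    apply Finset.sum_eq_zero
    intro k hk
    simp only [Finset.mem_Ioc] at hk
    simp only [Eaux]
    rw [if_neg (by omega), if_pos (Or.inr hk.1)]
  have e3 : ∑ k ∈ Finset.Ioc ((d : ℤ) - N) ((d : ℤ) - n), Eaux N d n lam k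
      = ((N - n : ℕ) : ℝ) * N := by
    rw [Finset.sum_congr rfl (fun k hk => by
      simp only [Finset.mem_Ioc] at hk
      simp only [Eaux]
      rw [if_pos (Or.inl hk.2)]), Finset.sum_const, Int.card_Ioc]
    rw [show ((d : ℤ) - n - ((d : ℤ) - N)).toNat = N - n by omega, nsmul_eq_mul]
  have e4 : ∑ k ∈ Finset.Ioc ((N : ℤ) - n) (N : ℤ), Eaux N d n lam k = 0 := by
    apply Finset.sum_eq_zero
    intro k hk
    simp only [Finset.mem_Ioc] at hk
    simp only [Eaux]
    rw [if_neg (by omega), if_pos (Or.inl hk.1)]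
  have eqT1 : ∑ k ∈ Finset.Ioc ((d : ℤ) - N) (N : ℤ), Eaux N d n lam k
      = ((N - d : ℕ) : ℝ) * N + (d : ℝ) * ((N - n : ℕ) : ℝ) := by
    rw [sum_Ioc_split _ (by omega : (d : ℤ) - N ≤ 0) (by omega : (0 : ℤ) ≤ N),
      sum_Ioc_split _ (by omega : (0 : ℤ) ≤ d) (by omega : (d : ℤ) ≤ N),
      e1, e2, hSlam]
    ring
  have eqT2 : ∑ k ∈ Finset.Ioc ((d : ℤ) - N) (N : ℤ), Eaux N d n lam k
      = ((N - n : ℕ) : ℝ) * N +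
        ∑ k ∈ Finset.Ioc ((d : ℤ) - n) ((N : ℤ) - n), Eaux N d n lam k := by
    rw [sum_Ioc_split _ (by omega : (d : ℤ) - N ≤ (d : ℤ) - n)
        (by omega : (d : ℤ) - n ≤ (N : ℤ)),
      sum_Ioc_split _ (by omega : (d : ℤ) - n ≤ (N : ℤ) - n)
        (by omega : (N : ℤ) - n ≤ (N : ℤ)),
      e3, e4]
    ring
  rw [hSmu]
  have hc1 : ((N - d : ℕ) : ℝ) = (N : ℝ) - d := by
    rw [Nat.cast_sub hd]
  have hc2 : ((N - n : ℕ) : ℝ) = (N : ℝ) - n := by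
    rw [Nat.cast_sub hn]
  rw [hc1, hc2] at eqT1
  rw [hc2] at eqT2
  rw [hc1]
  linear_combination eqT1 - eqT2

lemma psi_mem (hd : d ≤ N) (hl : lam ∈ Lambda N d) : Psi N d lam ∈ Lambda N (N - d) := by
  have hNr : (0 : ℝ) ≤ N := Nat.cast_nonneg N
  refine ⟨?_, ?_, ?_, ?_, ?_⟩
  · intro i h1 h2
    rw [entPsi N d lam i 0 h1 h2 (Nat.zero_le _), if_pos (by omega)]
  · intro i h1 h2
    rw [entPsi N d lam i N h1 h2 le_rfl, if_neg (by omega), if_pos (by omega)]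
  · exact psi_sum hd hl
  · intro i n h1 h2 hn
    rw [entPsi N d lam i n h1 h2 (by omega), entPsi N d lam i (n + 1) h1 h2 (by omega)]
    by_cases c1 : n < i
    · rw [if_pos c1]
      by_cases b1 : n + 1 < i
      · rw [if_pos b1]
      · rw [if_neg b1]
        by_cases b2 : d + i ≤ n + 1
        · rw [if_pos b2]
          exact hNr
        · rw [if_neg b2]
          exact ent_nonneg hl _ _ (by omega) (by omega) (by omega)
    · rw [if_neg c1, if_neg (by omega : ¬ n + 1 < i)]
      by_cases c2 : d + i ≤ n
      · rw [if_pos c2, if_pos (by omega)]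
      · rw [if_neg c2]
        by_cases c3 : d + i ≤ n + 1
        · rw [if_pos c3]
          exact ent_le_N hl _ _ (by omega) (by omega) (by omega)
        · rw [if_neg c3]
          have h := hl.2.2.2.2 (d + i - n) (N - n) (by omega) (by omega) (by omega) (by omega)
          rwa [show d + i - n - 1 = d + i - (n + 1) by omega,
            show N - n - 1 = N - (n + 1) by omega] at h
  · intro i n h1 h2 hn1 hn2
    rw [entPsi N d lam i n (by omega) h2 hn2,
      entPsi N d lam (i - 1) (n - 1) (by omega) (by omega) (by omega)]
    by_cases c1 : n < i
    · rw [if_pos c1, if_pos (by omega : n - 1 < i - 1)]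
    · rw [if_neg c1, if_neg (by omega : ¬ n - 1 < i - 1)]
      by_cases c2 : d + i ≤ n
      · rw [if_pos c2, if_pos (by omega)]
      · rw [if_neg c2, if_neg (by omega)]
        have h := hl.2.2.2.1 (d + i - n) (N - n) (by omega) (by omega) (by omega)
        rw [show d + (i - 1) - (n - 1) = d + i - n by omega,
          show N - (n - 1) = N - n + 1 by omega]
        exact h

end memb

lemma ent_val_s9 {N δ : ℕ} (f : Fin δ → Fin (N + 1) → ℝ) (i : Fin δ) (m : Fin (N + 1)) :
    ent N δ f (i.val + 1) m.val = f i m := by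
  rw [ent, dif_pos ⟨Nat.le_add_left 1 i.val, i.isLt, Nat.lt_succ_iff.mp m.isLt⟩]
  simp

lemma ent_recast {N d d' : ℕ} (h : d' = d) (f : Fin d' → Fin (N + 1) → ℝ) (j m : ℕ) :
    ent N d (fun i k => f (Fin.cast h.symm i) k) j m = ent N d' f j m := by
  subst h
  rfl

lemma recast_mem {N d d' : ℕ} (h : d' = d) (f : Fin d' → Fin (N + 1) → ℝ)
    (hf : f ∈ Lambda N d') : (fun i k => f (Fin.cast h.symm i) k) ∈ Lambda N d := by
  subst h
  exact hf

lemma psi_psi {N d : ℕ} {lam : Fin d → Fin (N + 1) → ℝ} (hd : d ≤ N)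
    (hl : lam ∈ Lambda N d) (i n : ℕ) (h1 : 1 ≤ i) (h2 : i ≤ d) (h3 : n ≤ N) :
    ent N (N - (N - d)) (Psi N (N - d) (Psi N d lam)) i n = ent N d lam i n := by
  rw [entPsi N (N - d) (Psi N d lam) i n h1 (by omega) h3]
  by_cases c1 : n < i
  · rw [if_pos c1, ent_eq_zero_of hl i n c1]
  · rw [if_neg c1]
    by_cases c2 : (N - d) + i ≤ n
    · rw [if_pos c2, ent_eq_N_of hl hd i n h1 h2 h3 (by omega)]
    · rw [if_neg c2]
      rw [entPsi N d lam ((N - d) + i - n) (N - n) (by omega) (by omega) (by omega)]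
      rw [if_neg (by omega), if_neg (by omega)]
      congr 1 <;> omega

theorem stmt_9 (N d : ℕ) (hd : d ≤ N) :
    Set.BijOn (Psi N d) (Lambda N d) (Lambda N (N - d)) ∧
    ∀ lam ∈ Lambda N d, ∀ i n, 1 ≤ i → i ≤ d → n ≤ N →
      ent N (N - (N - d)) (Psi N (N - d) (Psi N d lam)) i n = ent N d lam i n := by
  have he : N - d ≤ N := Nat.sub_le N d
  refine ⟨⟨fun lam hl => psi_mem hd hl, ?_, ?_⟩,
    fun lam hl i n h1 h2 h3 => psi_psi hd hl i n h1 h2 h3⟩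
  · -- InjOn
    intro lam hl lam' hl' heq
    funext i m
    have e1 := psi_psi hd hl (i.val + 1) m.val (Nat.le_add_left 1 _) i.isLt
      (Nat.lt_succ_iff.mp m.isLt)
    have e2 := psi_psi hd hl' (i.val + 1) m.val (Nat.le_add_left 1 _) i.isLt
      (Nat.lt_succ_iff.mp m.isLt)
    rw [heq] at e1
    rw [ent_val_s9 lam i m] at e1
    rw [ent_val_s9 lam' i m] at e2
    exact e1.symm.trans e2
  · -- SurjOn
    intro mu hmu
    have hdd : N - (N - d) = d := by omega
    refine ⟨fun i k => Psi N (N - d) mu (Fin.cast hdd.symm i) k,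
      recast_mem hdd _ (psi_mem he hmu), ?_⟩
    funext i m
    have hiv := i.isLt
    have hmv := m.isLt
    rw [show mu i m = ent N (N - d) mu (i.val + 1) m.val from (ent_val_s9 mu i m).symm]
    show (if m.val < i.val + 1 then 0
        else if d + i.val + 1 ≤ m.val then (N : ℝ)
        else ent N d (fun i k => Psi N (N - d) mu (Fin.cast hdd.symm i) k)
          (d + i.val + 1 - m.val) (N - m.val)) = _
    by_cases c1 : m.val < i.val + 1
    · rw [if_pos c1, ent_eq_zero_of hmu (i.val + 1) m.val (by omega)]
    · rw [if_neg c1]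
      by_cases c2 : d + i.val + 1 ≤ m.val
      · rw [if_pos c2,
          ent_eq_N_of hmu he (i.val + 1) m.val (by omega) (by omega) (by omega) (by omega)]
      · rw [if_neg c2]
        rw [ent_recast hdd]
        rw [entPsi N (N - d) mu (d + i.val + 1 - m.val) (N - m.val) (by omega) (by omega)
          (by omega)]
        rw [if_neg (by omega), if_neg (by omega)]
        congr 1 <;> omega
end

section
/- For λ ∈ Λ_{N,d} and each 1≤n≤N-1, the n-th column sum of Ψ_{N,d}(λ) equals (N-d)n, i.e. ∑_{i=1}^{N-d} (Ψ_{N,d}(λ))_{i,n} = (N-d)n. -/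
open Finset

theorem stmt_10 (N d : ℕ) (hd : d ≤ N) (lam : Fin d → Fin (N + 1) → ℝ)
    (hlam : lam ∈ Lambda N d) :
    ∀ n, 1 ≤ n → n ≤ N - 1 →
      ∑ i ∈ Finset.Icc 1 (N - d), ent N (N - d) (Psi N d lam) i n = (N - d) * n := by
  obtain ⟨h0, hNv, hsum, hmono, hdiag⟩ := hlam
  -- monotonicity in the second argument
  have hmono' : ∀ i k m, 1 ≤ i → i ≤ d → m + k ≤ N →
      ent N d lam i m ≤ ent N d lam i (m + k) := by
    intro i k
    induction k with
    | zero => intro m _ _ _; simp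
    | succ k ih =>
      intro m hi1 hi2 h
      have h1 : ent N d lam i m ≤ ent N d lam i (m + k) := ih m hi1 hi2 (by omega)
      have h2 : ent N d lam i (m + k) ≤ ent N d lam i (m + k + 1) :=
        hmono i (m + k) hi1 hi2 (by omega)
      calc ent N d lam i m ≤ ent N d lam i (m + k) := h1
        _ = ent N d lam i (m + k) := rfl
        _ ≤ ent N d lam i (m + (k + 1)) := by rw [show m + (k + 1) = m + k + 1 by ring]; exact h2
  have hnonneg : ∀ i m, 1 ≤ i → i ≤ d → m ≤ N → 0 ≤ ent N d lam i m := by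
    intro i m hi1 hi2 hm
    have := hmono' i m 0 hi1 hi2 (by omega)
    rw [zero_add] at this
    rw [← h0 i hi1 hi2]; exact this
  have hleN : ∀ i m, 1 ≤ i → i ≤ d → m ≤ N → ent N d lam i m ≤ N := by
    intro i m hi1 hi2 hm
    have := hmono' i (N - m) m hi1 hi2 (by omega)
    rw [show m + (N - m) = N by omega] at this
    rw [← hNv i hi1 hi2]; exact this
  -- entries vanish strictly above the diagonal
  have hzero : ∀ m i, 1 ≤ i → i ≤ d → m < i → ent N d lam i m = 0 := by
    intro m
    induction m with
    | zero => intro i hi1 hi2 _; exact h0 i hi1 hi2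
    | succ m ih =>
      intro i hi1 hi2 hmi
      have hi1' : 1 < i := by omega
      have hdg := hdiag i (m + 1) hi1' hi2 (by omega) (by omega)
      simp only [Nat.add_sub_cancel] at hdg
      have hz : ent N d lam (i - 1) m = 0 := ih (i - 1) (by omega) (by omega) (by omega)
      have hnn : 0 ≤ ent N d lam i (m + 1) := hnonneg i (m + 1) (by omega) hi2 (by omega)
      linarith [hz ▸ hdg]
  -- entries equal N near the lower-left corner
  have hNval : ∀ k i m, 1 ≤ i → i + k ≤ d → m + k = N → ent N d lam i m = N := by
    intro k
    induction k with
    | zero => intro i m hi1 hi2 hm; rw [show m = N by omega]; exact hNv i hi1 (by omega)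
    | succ k ih =>
      intro i m hi1 hi2 hm
      have hdg := hdiag (i + 1) (m + 1) (by omega) (by omega) (by omega) (by omega)
      simp only [Nat.add_sub_cancel] at hdg
      have hv : ent N d lam (i + 1) (m + 1) = N := ih (i + 1) (m + 1) (by omega) (by omega) (by omega)
      have hle : ent N d lam i m ≤ N := hleN i m hi1 (by omega) (by omega)
      linarith [hv ▸ hdg]
  intro n hn1 hn2
  have hnN : n ≤ N := by omega
  set F : ℕ → ℝ := fun j => if j = 0 then (N : ℝ) else if j ≤ d then ent N d lam j (N - n) else 0
    with hF
  -- each summand equals F (d + i - n)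
  have hterm : ∀ i ∈ Finset.Ioc 0 (N - d),
      ent N (N - d) (Psi N d lam) i n = F (d + i - n) := by
    intro i hi
    simp only [Finset.mem_Ioc] at hi
    rw [ent, dif_pos ⟨by omega, by omega, hnN⟩]
    simp only [Psi, hF]
    by_cases h1 : n < i
    · rw [if_pos (by omega : n < i - 1 + 1), if_neg (by omega : ¬ d + i - n = 0),
        if_neg (by omega : ¬ d + i - n ≤ d)]
    · rw [if_neg (by omega : ¬ n < i - 1 + 1)]
      by_cases h2 : d + i ≤ n
      · rw [if_pos (by omega : d + (i - 1) + 1 ≤ n), if_pos (by omega : d + i - n = 0)]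
      · rw [if_neg (by omega : ¬ d + (i - 1) + 1 ≤ n), if_neg (by omega : ¬ d + i - n = 0),
          if_pos (by omega : d + i - n ≤ d), show d + (i - 1) + 1 - n = d + i - n by omega]
  -- the tail of the extended sum vanishes
  have hext : ∀ i ∈ Finset.Ioc (N - d) N, F (d + i - n) = 0 := by
    intro i hi
    simp only [Finset.mem_Ioc] at hi
    simp only [hF]
    by_cases h1 : n < i
    · rw [if_neg (by omega : ¬ d + i - n = 0), if_neg (by omega : ¬ d + i - n ≤ d)]
    · rw [if_neg (by omega : ¬ d + i - n = 0), if_pos (by omega : d + i - n ≤ d)]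
      exact hzero (N - n) (d + i - n) (by omega) (by omega) (by omega)
  have e1 : ∑ i ∈ Finset.Icc 1 (N - d), ent N (N - d) (Psi N d lam) i n
      = ∑ i ∈ Finset.Ioc 0 (N - d), F (d + i - n) := by
    rw [← Finset.Icc_add_one_left_eq_Ioc 0 (N - d)] at hterm ⊢
    exact Finset.sum_congr rfl hterm
  have e3 : ∑ i ∈ Finset.Ioc 0 (N - d), F (d + i - n)
      + ∑ i ∈ Finset.Ioc (N - d) N, F (d + i - n)
      = ∑ i ∈ Finset.Ioc 0 N, F (d + i - n) :=
    Finset.sum_Ioc_consecutive _ (Nat.zero_le _) (by omega)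
  have e2 : ∑ i ∈ Finset.Ioc (N - d) N, F (d + i - n) = 0 := Finset.sum_eq_zero hext
  have e4 : ∑ i ∈ Finset.Ioc 0 (n - d), F (d + i - n)
      + ∑ i ∈ Finset.Ioc (n - d) N, F (d + i - n)
      = ∑ i ∈ Finset.Ioc 0 N, F (d + i - n) :=
    Finset.sum_Ioc_consecutive _ (Nat.zero_le _) (by omega)
  have e5 : ∑ i ∈ Finset.Ioc 0 (n - d), F (d + i - n) = (n - d : ℕ) * N := by
    rw [Finset.sum_congr rfl (fun i hi => ?_), Finset.sum_const, Nat.card_Ioc,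
      Nat.sub_zero, nsmul_eq_mul]
    simp only [Finset.mem_Ioc] at hi
    simp only [hF]
    rw [if_pos (by omega : d + i - n = 0)]
  have e6 : ∑ i ∈ Finset.Ioc (n - d) N, F (d + i - n)
      = ∑ j ∈ Finset.Ioc (d - n) (d + N - n), F j := by
    refine Finset.sum_nbij' (fun i => d + i - n) (fun j => j + n - d) ?_ ?_ ?_ ?_ ?_ <;>
      intro a ha <;> simp only [Finset.mem_Ioc] at ha ⊢ <;> omega
  have e7 : ∑ j ∈ Finset.Ioc (d - n) d, F j + ∑ j ∈ Finset.Ioc d (d + N - n), F j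
      = ∑ j ∈ Finset.Ioc (d - n) (d + N - n), F j :=
    Finset.sum_Ioc_consecutive _ (by omega) (by omega)
  have e8 : ∑ j ∈ Finset.Ioc d (d + N - n), F j = 0 := by
    refine Finset.sum_eq_zero fun j hj => ?_
    simp only [Finset.mem_Ioc] at hj
    simp only [hF]
    rw [if_neg (by omega : ¬ j = 0), if_neg (by omega : ¬ j ≤ d)]
  have e9 : ∑ j ∈ Finset.Ioc 0 (d - n), F j + ∑ j ∈ Finset.Ioc (d - n) d, F j
      = ∑ j ∈ Finset.Ioc 0 d, F j :=
    Finset.sum_Ioc_consecutive _ (Nat.zero_le _) (by omega)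
  have e10 : ∑ j ∈ Finset.Ioc 0 (d - n), F j = (d - n : ℕ) * N := by
    rw [Finset.sum_congr rfl (fun j hj => ?_), Finset.sum_const, Nat.card_Ioc,
      Nat.sub_zero, nsmul_eq_mul]
    simp only [Finset.mem_Ioc] at hj
    simp only [hF]
    rw [if_neg (by omega : ¬ j = 0), if_pos (by omega : j ≤ d)]
    exact hNval n j (N - n) (by omega) (by omega) (by omega)
  have e11 : ∑ j ∈ Finset.Ioc 0 d, F j = (d : ℝ) * ((N - n : ℕ) : ℝ) := by
    rw [Finset.sum_congr rfl (fun j hj => ?_)]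
    · rw [← Finset.Icc_add_one_left_eq_Ioc 0 d]
      exact hsum (N - n) (by omega)
    · simp only [Finset.mem_Ioc] at hj
      simp only [hF]
      rw [if_neg (by omega : ¬ j = 0), if_pos (by omega : j ≤ d)]
  have hfinal : ((n - d : ℕ) : ℝ) * N + ((d : ℝ) * ((N - n : ℕ) : ℝ) - ((d - n : ℕ) : ℝ) * N)
      = ((N : ℝ) - (d : ℝ)) * n := by
    rcases le_total d n with h | h
    · rw [Nat.cast_sub h, Nat.sub_eq_zero_of_le h, Nat.cast_sub hnN]
      push_cast; ring
    · rw [Nat.cast_sub h, Nat.sub_eq_zero_of_le h, Nat.cast_sub hnN]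
      push_cast; ring
  rw [e1]
  linarith [e2, e3, e4, e5, e6, e7, e8, e9, e10, e11, hfinal]
end

section
/- The maps Φ and Ψ commute: Φ_{N,N-d} ∘ Ψ_{N,d} = Ψ_{N,d} ∘ Φ_{N,d} as maps on the affine hull of Λ_{N,d}. -/
open Finset

/-- The map `Φ_{N,d}` on eigenstep tableaux. -/
def Phi (N d : ℕ) (lam : Fin d → Fin (N + 1) → ℝ) : Fin d → Fin (N + 1) → ℝ :=
  fun i n => N - ent N d lam (d - i.val) (N - n.val)

theorem stmt_13 (N d : ℕ) (hd : d ≤ N) (lam : Fin d → Fin (N + 1) → ℝ)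
    (h0 : ∀ i n, 1 ≤ i → i ≤ d → n ≤ N → n < i → ent N d lam i n = 0)
    (hN : ∀ i n, 1 ≤ i → i ≤ d → n ≤ N → (i : ℤ) < (n : ℤ) + d - N + 1 →
      ent N d lam i n = N)
    (hs : ∀ n, n ≤ N → ∑ i ∈ Finset.Icc 1 d, ent N d lam i n = d * n) :
    Phi N (N - d) (Psi N d lam) = Psi N d (Phi N d lam) := by
  funext i n
  have hi : (i : ℕ) < N - d := i.isLt
  have hn : (n : ℕ) ≤ N := Nat.lt_succ_iff.mp n.isLt
  have hdN : d < N := by omega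
  simp only [Phi, ent]
  rw [dif_pos (by omega : 1 ≤ N - d - i.val ∧ N - d - i.val ≤ N - d ∧ N - n.val ≤ N)]
  simp only [Psi]
  by_cases h1 : n.val ≤ i.val
  · rw [if_neg (show ¬(N - n.val < N - d - i.val - 1 + 1) by omega),
        if_pos (show d + (N - d - i.val - 1) + 1 ≤ N - n.val by omega),
        if_pos (show n.val < i.val + 1 by omega)]
    ring
  · by_cases h2 : d + i.val < n.val
    · rw [if_pos (show N - n.val < N - d - i.val - 1 + 1 by omega),
          if_neg (show ¬(n.val < i.val + 1) by omega),
          if_pos (show d + i.val + 1 ≤ n.val by omega)]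
      ring
    · rw [if_neg (show ¬(N - n.val < N - d - i.val - 1 + 1) by omega),
          if_neg (show ¬(d + (N - d - i.val - 1) + 1 ≤ N - n.val) by omega),
          if_neg (show ¬(n.val < i.val + 1) by omega),
          if_neg (show ¬(d + i.val + 1 ≤ n.val) by omega)]
      have e1 : d + (N - d - i.val - 1) + 1 - (N - n.val) = n.val - i.val := by omega
      have e2 : N - (N - n.val) = n.val := by omega
      have R : ent N d (Phi N d lam) (d + i.val + 1 - n.val) (N - n.val)
          = (N : ℝ) - ent N d lam (n.val - i.val) n.val := by
        rw [ent, dif_pos (by omega :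
          1 ≤ d + i.val + 1 - n.val ∧ d + i.val + 1 - n.val ≤ d ∧ N - n.val ≤ N)]
        simp only [Phi]
        rw [show d - (d + i.val + 1 - n.val - 1) = n.val - i.val by omega, e2]
      rw [e1, e2, R]
end
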